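/- arXiv:math/0209384 — 3 statements merged into one kernel-verified Lean document; each statement's English description precedes it below -/
import Mathlib

section
/- Let m ≥ 2, let Q : (0,∞) → ℝ be a positive non-decreasing function with Q(t) = o(t²) as t → +∞ and liminf_{r→+∞} Q(r)·(log r)/r² < +∞. Let b : ℝ^m → ℝ be continuous with b(x) ≥ 1/Q(|x|) for all x with |x| > 0, and let f : ℝ → ℝ be continuous. Suppose u ∈ C²(ℝ^m) satisfies u* := sup_{ℝ^m} u < +∞ and Δu(x) ≥ b(x) f(u(x)) for every x in the set Ω_γ = {x ∈ ℝ^m : u(x) > γ}, for some γ < u*. Then f(u*) ≤ 0. -/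
open Filter Asymptotics

/-- The Laplacian on Euclidean space: the sum of the pure second partial derivatives. -/
noncomputable def euclideanLaplacian {m : ℕ} (u : EuclideanSpace ℝ (Fin m) → ℝ)
    (x : EuclideanSpace ℝ (Fin m)) : ℝ :=
  ∑ i, fderiv ℝ (fun y => fderiv ℝ u y (EuclideanSpace.single i 1)) x (EuclideanSpace.single i 1)

/-!
Suppose `f (sup u) > 0`. The hypothesis on `Q` gives `b x ≥ c / (1 + |x|²)` for some `c > 0`
(at the origin by continuity of `b`). Maximising `u - θ log (1 + |x|²)` for small `θ > 0`
produces points `x` where `u x` is as close to `sup u` as we like while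
`(1 + |x|²) Δu(x) ≤ θ (1 + |x|²) Δ log (1 + |x|²) ≤ 2 m θ` is as small as we like.
At such a point `Δu(x) ≥ b x f (u x) ≥ c f (sup u) / (2 (1 + |x|²))`, a contradiction.
-/

open Topology

theorem IsLocalMax.deriv_deriv_nonpos {f : ℝ → ℝ} {a : ℝ} (h : IsLocalMax f a)
    (hf : ContinuousAt f a) : deriv (deriv f) a ≤ 0 := by
  by_contra! hpos
  have hconst : f =ᶠ[𝓝 a] fun _ => f a :=
    (h.and (isLocalMin_of_deriv_deriv_pos hpos h.deriv_eq_zero hf)).mono fun _ hx =>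
      le_antisymm hx.1 hx.2
  have hzero := hconst.deriv.deriv_eq
  simp only [deriv_const'] at hzero
  simp [hzero] at hpos

section SecondDerivative

variable {E : Type*} [NormedAddCommGroup E] [NormedSpace ℝ E]

theorem ContDiff.differentiable_fderiv_apply {u : E → ℝ} (hu : ContDiff ℝ 2 u) (e : E) :
    Differentiable ℝ fun y => fderiv ℝ u y e :=
  ((hu.fderiv_right (m := 1) le_rfl).differentiable one_ne_zero).clm_apply
    (differentiable_const e)

theorem IsLocalMax.fderiv_fderiv_apply_nonpos {v : E → ℝ} (hv : ContDiff ℝ 2 v) {x₀ : E}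
    (hmax : IsLocalMax v x₀) (e : E) : fderiv ℝ (fun y => fderiv ℝ v y e) x₀ e ≤ 0 := by
  have hline : ∀ t : ℝ, HasDerivAt (fun t : ℝ => x₀ + t • e) e t := fun t => by
    simpa using ((hasDerivAt_id t).smul_const e).const_add x₀
  have hderiv : deriv (fun t : ℝ => v (x₀ + t • e)) = fun t => fderiv ℝ v (x₀ + t • e) e :=
    funext fun t =>
      ((hv.differentiable two_ne_zero _).hasFDerivAt.comp_hasDerivAt t (hline t)).deriv
  have hderiv2 : deriv (deriv fun t : ℝ => v (x₀ + t • e)) 0 =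
      fderiv ℝ (fun y => fderiv ℝ v y e) x₀ e := by
    rw [hderiv]
    exact ((hv.differentiable_fderiv_apply e x₀).hasFDerivAt.comp_hasDerivAt_of_eq 0 (hline 0)
      (by simp)).deriv
  rw [← hderiv2]
  refine IsLocalMax.deriv_deriv_nonpos ?_ (hv.continuous.comp (by fun_prop)).continuousAt
  exact IsLocalMax.comp_continuous (f := v) (g := fun t : ℝ => x₀ + t • e) (by simpa using hmax)
    (by fun_prop)

end SecondDerivative

section Barrier

variable {E : Type*} [NormedAddCommGroup E]

noncomputable def logOnePlusNormSq (x : E) : ℝ := Real.log (1 + ‖x‖ ^ 2)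

theorem logOnePlusNormSq_nonneg (x : E) : 0 ≤ logOnePlusNormSq x :=
  Real.log_nonneg (by nlinarith [sq_nonneg ‖x‖])

theorem tendsto_logOnePlusNormSq_cocompact [ProperSpace E] :
    Tendsto (logOnePlusNormSq (E := E)) (cocompact E) atTop :=
  Real.tendsto_log_atTop.comp <| tendsto_atTop_add_const_left _ 1 <|
    (tendsto_pow_atTop two_ne_zero).comp tendsto_norm_cocompact_atTop

variable [InnerProductSpace ℝ E]

theorem contDiff_logOnePlusNormSq : ContDiff ℝ 2 (logOnePlusNormSq (E := E)) :=
  (contDiff_const.add (contDiff_norm_sq ℝ)).log fun _ => by positivity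

theorem hasFDerivAt_logOnePlusNormSq (x : E) :
    HasFDerivAt logOnePlusNormSq ((1 + ‖x‖ ^ 2)⁻¹ • ((2:ℕ) • innerSL ℝ x)) x :=
  (Real.hasDerivAt_log (by positivity)).comp_hasFDerivAt x
    ((hasStrictFDerivAt_norm_sq x).hasFDerivAt.const_add 1)

end Barrier

theorem exists_le_mul_one_add_sq_of_isLittleO {Q : ℝ → ℝ} (hQmono : MonotoneOn Q (Set.Ioi 0))
    (hQo : Q =o[atTop] fun t => t ^ 2) : ∃ K > 0, ∀ t > 0, Q t ≤ K * (1 + t ^ 2) := by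
  obtain ⟨R, hR⟩ := eventually_atTop.1 (hQo.def one_pos)
  set R₀ := max R 1
  have hK : 1 ≤ max 1 (Q R₀) := le_max_left _ _
  refine ⟨max 1 (Q R₀), by linarith, fun t ht => ?_⟩
  rcases le_total t R₀ with h | h
  · calc Q t ≤ Q R₀ := hQmono ht (ht.trans_le h) h
      _ ≤ max 1 (Q R₀) := le_max_right _ _
      _ ≤ max 1 (Q R₀) * (1 + t ^ 2) := le_mul_of_one_le_right (by linarith) (by nlinarith)
  · calc Q t ≤ ‖Q t‖ := le_abs_self _
      _ ≤ 1 * ‖t ^ 2‖ := hR t ((le_max_left _ _).trans h)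
      _ = t ^ 2 := by simp
      _ ≤ max 1 (Q R₀) * (1 + t ^ 2) := by nlinarith

theorem exists_div_one_add_sq_norm_le {E : Type*} [NormedAddCommGroup E] [NormedSpace ℝ E]
    [Nontrivial E] {Q : ℝ → ℝ} {b : E → ℝ} (hQpos : ∀ t > 0, 0 < Q t)
    (hQmono : MonotoneOn Q (Set.Ioi 0)) (hQo : Q =o[atTop] fun t => t ^ 2) (hb : Continuous b)
    (hbQ : ∀ x : E, 0 < ‖x‖ → 1 / Q ‖x‖ ≤ b x) :
    ∃ c > 0, ∀ x, c / (1 + ‖x‖ ^ 2) ≤ b x := by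
  obtain ⟨K, hK, hQK⟩ := exists_le_mul_one_add_sq_of_isLittleO hQmono hQo
  have hoff : ∀ x ∈ ({0}ᶜ : Set E), 1 / K / (1 + ‖x‖ ^ 2) ≤ b x := fun x hx => by
    have hx : 0 < ‖x‖ := norm_pos_iff.2 hx
    calc 1 / K / (1 + ‖x‖ ^ 2) = 1 / (K * (1 + ‖x‖ ^ 2)) := by rw [div_div]
      _ ≤ 1 / Q ‖x‖ := one_div_le_one_div_of_le (hQpos _ hx) (hQK _ hx)
      _ ≤ b x := hbQ x hx
  exact ⟨1 / K, by positivity, fun x => le_on_closure hoff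
    (continuous_const.div (by fun_prop) fun y => by positivity).continuousOn hb.continuousOn
    (dense_compl_singleton 0 x)⟩

section Laplacian

variable {m : ℕ}

theorem euclideanLaplacian_nonpos_of_isLocalMax {v : EuclideanSpace ℝ (Fin m) → ℝ}
    (hv : ContDiff ℝ 2 v) {x₀ : EuclideanSpace ℝ (Fin m)} (hmax : IsLocalMax v x₀) :
    euclideanLaplacian v x₀ ≤ 0 :=
  Finset.sum_nonpos fun _ _ => hmax.fderiv_fderiv_apply_nonpos hv _

theorem euclideanLaplacian_sub_const_mul {u g : EuclideanSpace ℝ (Fin m) → ℝ}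
    (hu : ContDiff ℝ 2 u) (hg : ContDiff ℝ 2 g) (θ : ℝ) (x : EuclideanSpace ℝ (Fin m)) :
    euclideanLaplacian (fun y => u y - θ * g y) x =
      euclideanLaplacian u x - θ * euclideanLaplacian g x := by
  have hu1 := hu.differentiable two_ne_zero
  have hg1 := hg.differentiable two_ne_zero
  unfold euclideanLaplacian
  rw [Finset.mul_sum, ← Finset.sum_sub_distrib]
  refine Finset.sum_congr rfl fun i _ => ?_
  set e : EuclideanSpace ℝ (Fin m) := EuclideanSpace.single i 1
  have hfirst : (fun y => fderiv ℝ (fun y => u y - θ * g y) y e) =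
      fun y => fderiv ℝ u y e - θ * fderiv ℝ g y e := funext fun y => by
    rw [fderiv_fun_sub (hu1 y) ((hg1 y).const_mul θ), fderiv_const_mul (hg1 y)]
    rfl
  rw [hfirst, fderiv_fun_sub (hu.differentiable_fderiv_apply e x)
    ((hg.differentiable_fderiv_apply e x).const_mul θ),
    fderiv_const_mul (hg.differentiable_fderiv_apply e x)]
  rfl

theorem fderiv_logOnePlusNormSq_single (x : EuclideanSpace ℝ (Fin m)) (i : Fin m) :
    fderiv ℝ logOnePlusNormSq x (EuclideanSpace.single i 1) = 2 * x i / (1 + ‖x‖ ^ 2) := by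
  rw [(hasFDerivAt_logOnePlusNormSq x).fderiv]
  simp [EuclideanSpace.inner_single_right]
  ring

theorem fderiv_fderiv_logOnePlusNormSq_single (x : EuclideanSpace ℝ (Fin m)) (i : Fin m) :
    fderiv ℝ (fun y => fderiv ℝ logOnePlusNormSq y (EuclideanSpace.single i 1)) x
      (EuclideanSpace.single i 1) = (2 * (1 + ‖x‖ ^ 2) - 4 * x i ^ 2) / (1 + ‖x‖ ^ 2) ^ 2 := by
  have hden : (0:ℝ) < 1 + ‖x‖ ^ 2 := by positivity
  simp only [fderiv_logOnePlusNormSq_single, div_eq_mul_inv]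
  have hnum : HasFDerivAt (fun y : EuclideanSpace ℝ (Fin m) => 2 * y i)
      ((2:ℝ) • EuclideanSpace.proj (𝕜 := ℝ) i) x :=
    (EuclideanSpace.proj (𝕜 := ℝ) i).hasFDerivAt.const_mul 2
  have hinv : HasFDerivAt (fun y : EuclideanSpace ℝ (Fin m) => (1 + ‖y‖ ^ 2)⁻¹)
      (-((1 + ‖x‖ ^ 2) ^ 2)⁻¹ • ((2:ℕ) • innerSL ℝ x)) x :=
    (hasDerivAt_inv hden.ne').comp_hasFDerivAt x
      ((hasStrictFDerivAt_norm_sq x).hasFDerivAt.const_add 1)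
  rw [(show HasFDerivAt (fun y : EuclideanSpace ℝ (Fin m) => 2 * y i * (1 + ‖y‖ ^ 2)⁻¹) _ x
    from hnum.mul hinv).fderiv]
  simp [EuclideanSpace.inner_single_right]
  field_simp
  ring

theorem euclideanLaplacian_logOnePlusNormSq (x : EuclideanSpace ℝ (Fin m)) :
    euclideanLaplacian logOnePlusNormSq x =
      2 * m / (1 + ‖x‖ ^ 2) - 4 * ‖x‖ ^ 2 / (1 + ‖x‖ ^ 2) ^ 2 := by
  have hden : (0:ℝ) < 1 + ‖x‖ ^ 2 := by positivity
  simp only [euclideanLaplacian, fderiv_fderiv_logOnePlusNormSq_single]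
  rw [← Finset.sum_div, Finset.sum_sub_distrib, Finset.sum_const, Finset.card_univ,
    Fintype.card_fin, ← Finset.mul_sum, EuclideanSpace.real_norm_sq_eq, nsmul_eq_mul]
  field_simp

theorem euclideanLaplacian_logOnePlusNormSq_le (x : EuclideanSpace ℝ (Fin m)) :
    euclideanLaplacian logOnePlusNormSq x ≤ 2 * m / (1 + ‖x‖ ^ 2) := by
  rw [euclideanLaplacian_logOnePlusNormSq]
  linarith [show (0:ℝ) ≤ 4 * ‖x‖ ^ 2 / (1 + ‖x‖ ^ 2) ^ 2 by positivity]

theorem exists_lt_apply_and_mul_euclideanLaplacian_le {u : EuclideanSpace ℝ (Fin m) → ℝ}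
    (hu : ContDiff ℝ 2 u) (hbdd : BddAbove (Set.range u)) {δ ε : ℝ} (hδ : 0 < δ) (hε : 0 < ε) :
    ∃ x, (⨆ y, u y) - δ < u x ∧ (1 + ‖x‖ ^ 2) * euclideanLaplacian u x ≤ ε := by
  obtain ⟨y, hy⟩ := exists_lt_of_lt_ciSup (sub_lt_self (⨆ y, u y) (half_pos hδ))
  have hsmall : ∀ c d : ℝ, 0 < d → ∀ᶠ θ in 𝓝[>] (0:ℝ), θ * c < d := fun c d hd =>
    nhdsWithin_le_nhds <|
      ((continuous_mul_const c).tendsto' 0 0 (zero_mul c)).eventually (gt_mem_nhds hd)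
  obtain ⟨θ, hθ, hθy, hθm⟩ : ∃ θ, 0 < θ ∧ θ * logOnePlusNormSq y < δ / 2 ∧ θ * (2 * m) < ε :=
    (eventually_mem_nhdsWithin.and ((hsmall _ _ (half_pos hδ)).and (hsmall _ _ hε))).exists
  set v := fun x => u x - θ * logOnePlusNormSq x
  have hv : ContDiff ℝ 2 v := hu.sub (contDiff_const.mul contDiff_logOnePlusNormSq)
  have hv_bot : Tendsto v (cocompact _) atBot := by
    refine tendsto_atBot_mono (fun x => sub_le_sub_right (le_ciSup hbdd x) _) ?_
    simpa only [sub_eq_add_neg, Function.comp_def] using tendsto_atBot_add_const_left _ (⨆ y, u y)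
      (tendsto_neg_atTop_atBot.comp (tendsto_logOnePlusNormSq_cocompact.const_mul_atTop hθ))
  obtain ⟨x, hx⟩ := hv.continuous.exists_forall_ge hv_bot
  refine ⟨x, ?_, ?_⟩
  · have hvy := hx y
    have := mul_nonneg hθ.le (logOnePlusNormSq_nonneg x)
    simp only [v] at hvy
    linarith
  · have hΔ := euclideanLaplacian_nonpos_of_isLocalMax hv (Eventually.of_forall hx)
    rw [euclideanLaplacian_sub_const_mul hu contDiff_logOnePlusNormSq] at hΔ
    have hP : (0:ℝ) < 1 + ‖x‖ ^ 2 := by positivity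
    calc (1 + ‖x‖ ^ 2) * euclideanLaplacian u x
        ≤ (1 + ‖x‖ ^ 2) * (θ * (2 * m / (1 + ‖x‖ ^ 2))) := by
          gcongr
          linarith [mul_le_mul_of_nonneg_left (euclideanLaplacian_logOnePlusNormSq_le x) hθ.le]
      _ = θ * (2 * m) := by field_simp
      _ ≤ ε := hθm.le

theorem apply_iSup_nonpos_of_mul_le_euclideanLaplacian {u b : EuclideanSpace ℝ (Fin m) → ℝ}
    {f : ℝ → ℝ} {c γ : ℝ} (hc : 0 < c) (hbc : ∀ x, c / (1 + ‖x‖ ^ 2) ≤ b x)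
    (hf : ContinuousAt f (⨆ x, u x)) (hu : ContDiff ℝ 2 u) (hbdd : BddAbove (Set.range u))
    (hγ : γ < ⨆ x, u x) (hineq : ∀ x, γ < u x → b x * f (u x) ≤ euclideanLaplacian u x) :
    f (⨆ x, u x) ≤ 0 := by
  set s := ⨆ x, u x
  by_contra! hfs
  obtain ⟨δ, hδ, hnear⟩ : ∃ δ > 0, ∀ t, dist t s < δ → γ < t ∧ f s / 2 < f t :=
    Metric.eventually_nhds_iff.1
      ((lt_mem_nhds hγ).and (hf.eventually (lt_mem_nhds (half_lt_self hfs))))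
  obtain ⟨x, hux, hΔ⟩ :=
    exists_lt_apply_and_mul_euclideanLaplacian_le hu hbdd hδ (by positivity : 0 < c * (f s / 2))
  have hdist : dist (u x) s < δ := by
    rw [Real.dist_eq, abs_lt]
    constructor <;> linarith [le_ciSup hbdd x]
  obtain ⟨hγx, hfx⟩ := hnear _ hdist
  have hP : (0:ℝ) < 1 + ‖x‖ ^ 2 := by positivity
  have hfx_pos : 0 < f (u x) := (half_pos hfs).trans hfx
  have hlower : c * f (u x) ≤ (1 + ‖x‖ ^ 2) * euclideanLaplacian u x := calc
    c * f (u x) = (1 + ‖x‖ ^ 2) * (c / (1 + ‖x‖ ^ 2) * f (u x)) := by field_simp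
    _ ≤ (1 + ‖x‖ ^ 2) * (b x * f (u x)) := by gcongr; exact hbc x
    _ ≤ (1 + ‖x‖ ^ 2) * euclideanLaplacian u x := by gcongr; exact hineq x hγx
  linarith [mul_lt_mul_of_pos_left hfx hc]

end Laplacian

theorem stmt0_general {m : ℕ} (hm : 2 ≤ m) (Q : ℝ → ℝ)
    (hQpos : ∀ t > (0:ℝ), 0 < Q t)
    (hQmono : ∀ s t : ℝ, 0 < s → s ≤ t → Q s ≤ Q t)
    (hQo : Q =o[atTop] fun t => t ^ 2)
    (b : EuclideanSpace ℝ (Fin m) → ℝ) (hb : Continuous b)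
    (hbQ : ∀ x : EuclideanSpace ℝ (Fin m), 0 < ‖x‖ → 1 / Q ‖x‖ ≤ b x)
    (f : ℝ → ℝ) (hf : Continuous f)
    (u : EuclideanSpace ℝ (Fin m) → ℝ) (hu : ContDiff ℝ 2 u)
    (hbdd : BddAbove (Set.range u))
    (γ : ℝ) (hγ : γ < ⨆ x, u x)
    (hineq : ∀ x : EuclideanSpace ℝ (Fin m), γ < u x →
      b x * f (u x) ≤ euclideanLaplacian u x) :
    f (⨆ x, u x) ≤ 0 := by
  have : NeZero m := ⟨by omega⟩
  obtain ⟨c, hc, hbc⟩ := exists_div_one_add_sq_norm_le hQpos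
    (fun s hs _ _ hst => hQmono s _ hs hst) hQo hb hbQ
  exact apply_iSup_nonpos_of_mul_le_euclideanLaplacian hc hbc hf.continuousAt hu hbdd hγ hineq

theorem stmt0 {m : ℕ} (hm : 2 ≤ m) (Q : ℝ → ℝ)
    (hQpos : ∀ t > (0:ℝ), 0 < Q t)
    (hQmono : ∀ s t : ℝ, 0 < s → s ≤ t → Q s ≤ Q t)
    (hQo : Q =o[atTop] fun t => t ^ 2)
    (hliminf : ∃ C : ℝ, ∃ᶠ r in atTop, Q r * Real.log r / r ^ 2 ≤ C)
    (b : EuclideanSpace ℝ (Fin m) → ℝ) (hb : Continuous b)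
    (hbQ : ∀ x : EuclideanSpace ℝ (Fin m), 0 < ‖x‖ → 1 / Q ‖x‖ ≤ b x)
    (f : ℝ → ℝ) (hf : Continuous f)
    (u : EuclideanSpace ℝ (Fin m) → ℝ) (hu : ContDiff ℝ 2 u)
    (hbdd : BddAbove (Set.range u))
    (γ : ℝ) (hγ : γ < ⨆ x, u x)
    (hineq : ∀ x : EuclideanSpace ℝ (Fin m), γ < u x →
      b x * f (u x) ≤ euclideanLaplacian u x) :
    f (⨆ x, u x) ≤ 0 :=
  stmt0_general hm Q hQpos hQmono hQo b hb hbQ f hf u hu hbdd γ hγ hineq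
end

section
/- Let m ≥ 2, p ≥ 2, and let Q : (0,∞) → ℝ be a positive non-decreasing function with Q(t) = o(t^p) as t → +∞ and liminf_{r→+∞} Q(r)·(log r)/r^p < +∞. Let b : ℝ^m → ℝ be continuous with b(x) ≥ 1/Q(|x|) for |x| > 0, and let f : ℝ → ℝ be continuous. Suppose u ∈ C²(ℝ^m) satisfies u* := sup u < +∞ and div(|∇u|^{p-2}∇u)(x) ≥ b(x) f(u(x)) for every x in the set Ω_γ = {x ∈ ℝ^m : u(x) > γ}, for some γ < u*. Then f(u*) ≤ 0. -/
open Filter Asymptotics Classical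

/-- The divergence of a vector field on Euclidean space. -/
noncomputable def euclideanDiv {m : ℕ}
    (X : EuclideanSpace ℝ (Fin m) → EuclideanSpace ℝ (Fin m))
    (x : EuclideanSpace ℝ (Fin m)) : ℝ :=
  ∑ i, fderiv ℝ (fun y => X y i) x (EuclideanSpace.single i 1)

/-- The p-Laplacian on Euclidean space: the divergence of the vector field
`|∇u|^(p-2) ∇u`, extended by `0` at critical points of `u`. -/
noncomputable def pLaplacian {m : ℕ} (p : ℝ) (u : EuclideanSpace ℝ (Fin m) → ℝ)
    (x : EuclideanSpace ℝ (Fin m)) : ℝ :=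
  euclideanDiv (fun y => if gradient u y = 0 then 0 else
    ‖gradient u y‖ ^ (p - 2) • gradient u y) x

/-
Suppose `f (sup u) > 0`. By continuity of `f`, on a superlevel set `{u > γ'}` we have
`Δ_p u ≥ b f(u) ≥ f(sup u) / (2 Q(max |x| 1))`. If `∇u` vanishes on this open set then `Δ_p u = 0`
there, which is absurd. Otherwise pick `c` in it with `∇u(c) ≠ 0` and compare `u` with the radial
barrier `v(x) = V(|x - c|)` solving `Δ_p v = δ / Q̄(|x - c|)`, where `Q̄ ≥ Q` is a continuous
monotone majorant of `Q` and `δ = f(sup u) / 4`. Because `Q = o(r^p)`, the slope `V'` is at least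
of order `1/r`, so `V` grows like `log r`; hence `u - v` attains a global maximum at some `x₀`, and
`u(x₀) ≥ u(c)`. Since `∇v(c) = 0 ≠ ∇u(c)`, `x₀ ≠ c`; at `x₀` the gradients of `u` and `v` agree and
their Hessians are ordered, which gives `Δ_p u(x₀) ≤ Δ_p v(x₀) ≤ δ / Q(max |x₀| 1)`, contradicting
the lower bound.
-/

open Set Topology MeasureTheory intervalIntegral InnerProductSpace

theorem IsLocalMax.nonpos_of_hasDerivAt_of_hasDerivAt {φ ψ : ℝ → ℝ} {x L : ℝ}
    (hmax : IsLocalMax φ x) (hφ : ∀ᶠ t in 𝓝 x, HasDerivAt φ (ψ t) t) (hψ : HasDerivAt ψ L x) :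
    L ≤ 0 := by
  by_contra! hL
  have hderiv : deriv φ =ᶠ[𝓝 x] ψ := hφ.mono fun t ht => ht.deriv
  have hψx : ψ x = 0 := hmax.hasDerivAt_eq_zero hφ.self_of_nhds
  -- a positive second derivative makes `x` also a local minimum, so `φ` is locally constant
  have hmin : IsLocalMin φ x :=
    isLocalMin_of_deriv_deriv_pos (by rwa [hderiv.deriv_eq, hψ.deriv])
      (by rw [hderiv.self_of_nhds, hψx]) hφ.self_of_nhds.continuousAt
  have hconst : φ =ᶠ[𝓝 x] fun _ => φ x := (hmin.and hmax).mono fun t ht => le_antisymm ht.2 ht.1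
  have hψ0 : ψ =ᶠ[𝓝 x] fun _ => 0 := by
    filter_upwards [hconst.eventuallyEq_nhds, hφ] with t ht hφt
    exact hφt.unique ((hasDerivAt_const t (φ x)).congr_of_eventuallyEq ht)
  exact hL.ne' ((hψ.congr_of_eventuallyEq hψ0.symm).unique (hasDerivAt_const x 0))

section InnerProductSpace

variable {F : Type*} [NormedAddCommGroup F] [InnerProductSpace ℝ F]

theorem hasFDerivAt_norm_rpow_smul (p : ℝ) {q : F} (hq : q ≠ 0) :
    HasFDerivAt (fun v : F => ‖v‖ ^ (p - 2) • v)
      (‖q‖ ^ (p - 2) • ContinuousLinearMap.id ℝ F +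
        ((p - 2) * ‖q‖ ^ (p - 4)) • (innerSL ℝ q).smulRight q) q := by
  have hpow : ∀ v : F, (‖v‖ ^ 2) ^ ((p - 2) / 2) = ‖v‖ ^ (p - 2) := fun v => by
    rw [← Real.rpow_natCast, ← Real.rpow_mul (norm_nonneg v)]
    ring_nf
  have hnorm : HasFDerivAt (fun v : F => ‖v‖ ^ (p - 2))
      (((p - 2) / 2 * (‖q‖ ^ 2) ^ ((p - 2) / 2 - 1)) • (2 • innerSL ℝ q)) q := by
    simp_rw [← hpow]
    exact ((hasStrictFDerivAt_norm_sq q).hasFDerivAt.rpow_const (Or.inl (by positivity)))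
  refine (hnorm.smul (hasFDerivAt_id q)).congr_fderiv ?_
  have hexp : (‖q‖ ^ 2) ^ ((p - 2) / 2 - 1) = ‖q‖ ^ (p - 4) := by
    rw [← Real.rpow_natCast, ← Real.rpow_mul (norm_nonneg q)]
    ring_nf
  ext z
  simp only [add_apply, smul_apply, ContinuousLinearMap.coe_id', id_eq,
    ContinuousLinearMap.smulRight_apply, innerSL_apply_apply, hexp, smul_eq_mul]
  module

theorem hasFDerivAt_norm_sub {c x : F} (hx : x ≠ c) :
    HasFDerivAt (fun y => ‖y - c‖) (‖x - c‖⁻¹ • innerSL ℝ (x - c)) x := by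
  have hr : 0 < ‖x - c‖ := norm_pos_iff.2 (sub_ne_zero.2 hx)
  have h := ((hasStrictFDerivAt_norm_sq (x - c)).hasFDerivAt.comp x
    ((hasFDerivAt_id x).sub_const c)).sqrt (by simp [hr.ne'])
  simp only [Function.comp_def, Real.sqrt_sq (norm_nonneg _)] at h
  refine h.congr_fderiv ?_
  ext z
  simp only [id_eq, one_div, mul_inv_rev, map_sub, ContinuousLinearMap.comp_id, smul_apply,
    sub_apply, coe_innerSL_apply, nsmul_eq_mul, Nat.cast_ofNat, smul_eq_mul]
  field_simp

variable [CompleteSpace F]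

theorem IsLocalMax.eq_of_hasGradientAt_sub {u v : F → ℝ} {gu gv x₀ : F}
    (hmax : IsLocalMax (fun y => u y - v y) x₀) (hu : HasGradientAt u gu x₀)
    (hv : HasGradientAt v gv x₀) : gu = gv := by
  have h := hmax.hasFDerivAt_eq_zero (hu.hasFDerivAt.sub hv.hasFDerivAt)
  rwa [← map_sub, LinearIsometryEquiv.map_eq_zero_iff, sub_eq_zero] at h

theorem inner_le_inner_of_isLocalMax_sub {U V : F → ℝ} {gU gV : F → F} {DU DV : F →L[ℝ] F}
    {x₀ : F} (hU : ∀ᶠ y in 𝓝 x₀, HasGradientAt U (gU y) y)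
    (hV : ∀ᶠ y in 𝓝 x₀, HasGradientAt V (gV y) y) (hDU : HasFDerivAt gU DU x₀)
    (hDV : HasFDerivAt gV DV x₀) (hmax : IsLocalMax (fun y => U y - V y) x₀) (w : F) :
    inner ℝ (DU w) w ≤ inner ℝ (DV w) w := by
  set ℓ : ℝ → F := fun t => x₀ + t • w
  have hℓ : ∀ t, HasDerivAt ℓ w t := fun t => by
    simpa only [id, one_smul] using ((hasDerivAt_id t).smul_const w).const_add x₀
  have hℓ0 : ℓ 0 = x₀ := by simp [ℓ]
  have hφ : ∀ᶠ t in 𝓝 (0 : ℝ), HasDerivAt (fun s => U (ℓ s) - V (ℓ s))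
      (inner ℝ (gU (ℓ t) - gV (ℓ t)) w) t := by
    have hℓx₀ : Tendsto ℓ (𝓝 0) (𝓝 x₀) := hℓ0 ▸ (hℓ 0).continuousAt.tendsto
    filter_upwards [hℓx₀.eventually (hU.and hV)] with t ⟨hUt, hVt⟩
    have hU' := hUt.hasFDerivAt.comp_hasDerivAt t (hℓ t)
    have hV' := hVt.hasFDerivAt.comp_hasDerivAt t (hℓ t)
    simpa [Function.comp_def, inner_sub_left] using hU'.fun_sub hV'
  have hψ : HasDerivAt (fun t => inner ℝ (gU (ℓ t) - gV (ℓ t)) w) (inner ℝ ((DU - DV) w) w) 0 := by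
    have h := (hℓ0 ▸ hDU.sub hDV).comp_hasDerivAt 0 (hℓ 0)
    simpa [Function.comp_def] using h.inner ℝ (hasDerivAt_const (0 : ℝ) w)
  have hmax' : IsLocalMax (fun s => U (ℓ s) - V (ℓ s)) 0 :=
    (hℓ0 ▸ hmax).comp_continuous (hℓ 0).continuousAt
  have := hmax'.nonpos_of_hasDerivAt_of_hasDerivAt hφ hψ
  rw [sub_apply, inner_sub_left] at this
  linarith

theorem inner_fderiv_gradient_comm {U : F → ℝ} {x₀ : F} {D : F →L[ℝ] F}
    (hU : ∀ᶠ y in 𝓝 x₀, DifferentiableAt ℝ U y) (hD : HasFDerivAt (gradient U) D x₀) (v w : F) :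
    inner ℝ (D v) w = inner ℝ (D w) v := by
  set T : F →L[ℝ] StrongDual ℝ F := (toDual ℝ F).toContinuousLinearEquiv.toContinuousLinearMap
  have hf : ∀ᶠ y in 𝓝 x₀, HasFDerivAt U (T (gradient U y)) y :=
    hU.mono fun y hy => hy.hasGradientAt.hasFDerivAt
  have := second_derivative_symmetric_of_eventually_of_real hf (T.hasFDerivAt.comp x₀ hD) v w
  simpa [T, toDual_apply_apply] using this

theorem ContDiff.differentiable_gradient {U : F → ℝ} (hU : ContDiff ℝ 2 U) :
    Differentiable ℝ (gradient U) := fun x =>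
  (toDual ℝ F).symm.toContinuousLinearEquiv.differentiableAt.comp x
    ((hU.fderiv_right (m := 1) (by norm_num)).differentiable (by norm_num) x)

theorem hasGradientAt_comp_norm_sub {g : ℝ → ℝ} {g' : ℝ} {c x : F} (hx : x ≠ c)
    (hg : HasDerivAt g g' ‖x - c‖) :
    HasGradientAt (fun y => g ‖y - c‖) ((g' / ‖x - c‖) • (x - c)) x := by
  rw [hasGradientAt_iff_hasFDerivAt]
  refine (hg.comp_hasFDerivAt x (hasFDerivAt_norm_sub hx)).congr_fderiv ?_
  ext z
  simp only [map_sub, smul_apply, sub_apply, coe_innerSL_apply, smul_eq_mul, map_smul,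
    toDual_apply_apply]
  ring

theorem hasGradientAt_comp_norm_sub_self {g : ℝ → ℝ} (hg : HasDerivAt g 0 0) (c : F) :
    HasGradientAt (fun y => g ‖y - c‖) 0 c := by
  rw [hasGradientAt_iff_isLittleO_nhds_zero]
  have h := (hasDerivAt_iff_isLittleO_nhds_zero.1 hg).comp_tendsto
    (continuous_norm.tendsto' (0 : F) 0 norm_zero)
  exact isLittleO_norm_right.1 (by simpa [Function.comp_def] using h)

end InnerProductSpace

section Euclidean

variable {m : ℕ}

local notation "E" => EuclideanSpace ℝ (Fin m)

theorem euclideanDiv_norm_rpow_smul (p : ℝ) {g : E → E} {D : E →L[ℝ] E} {x₀ : E}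
    (hg : HasFDerivAt g D x₀) (hq : g x₀ ≠ 0) (hD : ∀ v w, inner ℝ (D v) w = inner ℝ (D w) v) :
    euclideanDiv (fun y => ‖g y‖ ^ (p - 2) • g y) x₀ =
      ‖g x₀‖ ^ (p - 2) * ∑ i, inner ℝ (D (EuclideanSpace.single i 1)) (EuclideanSpace.single i 1)
        + (p - 2) * ‖g x₀‖ ^ (p - 4) * inner ℝ (D (g x₀)) (g x₀) := by
  have hN := (hasFDerivAt_norm_rpow_smul p hq).comp x₀ hg
  have hcoord : ∀ i, fderiv ℝ (fun y => (‖g y‖ ^ (p - 2) • g y) i) x₀ (EuclideanSpace.single i 1)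
      = ‖g x₀‖ ^ (p - 2) * inner ℝ (D (EuclideanSpace.single i 1)) (EuclideanSpace.single i 1)
        + (p - 2) * ‖g x₀‖ ^ (p - 4) *
          (inner ℝ (D (g x₀)) (EuclideanSpace.single i 1) * g x₀ i) := by
    intro i
    have hi : HasFDerivAt (fun y => (‖g y‖ ^ (p - 2) • g y) i) _ x₀ :=
      (EuclideanSpace.proj (𝕜 := ℝ) i).hasFDerivAt.comp x₀ hN
    rw [hi.fderiv]
    simp [EuclideanSpace.inner_single_right, real_inner_comm, hD (g x₀)]
  have hsum : ∑ i, inner ℝ (D (g x₀)) (EuclideanSpace.single i 1) * g x₀ i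
      = inner ℝ (D (g x₀)) (g x₀) := by
    simp [PiLp.inner_apply, mul_comm]
  simp only [euclideanDiv, hcoord, Finset.sum_add_distrib, ← Finset.mul_sum, hsum]

theorem pLaplacian_eq_euclideanDiv (p : ℝ) (u : E → ℝ) (x : E) :
    pLaplacian p u x = euclideanDiv (fun y => ‖gradient u y‖ ^ (p - 2) • gradient u y) x := by
  unfold pLaplacian
  congr 1
  funext y
  split_ifs with h <;> simp [h]

theorem pLaplacian_le_of_isLocalMax_sub {p : ℝ} (hp : 2 ≤ p) {u v : E → ℝ} {gv : E → E} {x₀ : E}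
    (hu : ContDiff ℝ 2 u) (hv : ∀ᶠ y in 𝓝 x₀, HasGradientAt v (gv y) y)
    (hgv : DifferentiableAt ℝ gv x₀) (hne : gv x₀ ≠ 0)
    (hmax : IsLocalMax (fun y => u y - v y) x₀) :
    pLaplacian p u x₀ ≤ euclideanDiv (fun y => ‖gv y‖ ^ (p - 2) • gv y) x₀ := by
  have hDu := (hu.differentiable_gradient x₀).hasFDerivAt
  have hu' : ∀ᶠ y in 𝓝 x₀, HasGradientAt u (gradient u y) y :=
    Eventually.of_forall fun y => (hu.differentiable (by norm_num) y).hasGradientAt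
  have hgrad := hmax.eq_of_hasGradientAt_sub hu'.self_of_nhds hv.self_of_nhds
  have hsymu := inner_fderiv_gradient_comm (hu'.mono fun y h => h.differentiableAt) hDu
  have hsymv := inner_fderiv_gradient_comm (hv.mono fun y h => h.differentiableAt)
    (hgv.hasFDerivAt.congr_of_eventuallyEq (hv.mono fun y h => h.gradient))
  have hle := inner_le_inner_of_isLocalMax_sub hu' hv hDu hgv.hasFDerivAt hmax
  rw [pLaplacian_eq_euclideanDiv, euclideanDiv_norm_rpow_smul p hDu (hgrad ▸ hne) hsymu,
    euclideanDiv_norm_rpow_smul p hgv.hasFDerivAt hne hsymv, hgrad]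
  have hp2 : 0 ≤ p - 2 := by linarith
  exact add_le_add (mul_le_mul_of_nonneg_left (Finset.sum_le_sum fun i _ => hle _) (by positivity))
    (mul_le_mul_of_nonneg_left (hle _) (by positivity))

theorem pLaplacian_eq_zero_of_eventually_gradient_eq_zero (p : ℝ) {u : E → ℝ} {x : E}
    (h : ∀ᶠ y in 𝓝 x, gradient u y = 0) : pLaplacian p u x = 0 := by
  have hcoord : ∀ i, fderiv ℝ (fun y => (if gradient u y = 0 then 0 else
      ‖gradient u y‖ ^ (p - 2) • gradient u y) i) x = 0 := fun i => by
    rw [Filter.EventuallyEq.fderiv_eq (f := fun _ => (0 : ℝ)) (h.mono fun y hy => by simp [hy])]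
    exact fderiv_const_apply 0
  simp [pLaplacian, euclideanDiv, hcoord]

theorem euclideanDiv_smul_sub {ρ : ℝ → ℝ} {ρ' : ℝ} {c x : E} (hx : x ≠ c)
    (hρ : HasDerivAt ρ ρ' ‖x - c‖) :
    euclideanDiv (fun y => ρ ‖y - c‖ • (y - c)) x = m * ρ ‖x - c‖ + ‖x - c‖ * ρ' := by
  have hr : 0 < ‖x - c‖ := norm_pos_iff.2 (sub_ne_zero.2 hx)
  have hcoord : ∀ i, fderiv ℝ (fun y => (ρ ‖y - c‖ • (y - c)) i) x (EuclideanSpace.single i 1)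
      = ρ ‖x - c‖ + ρ' * ‖x - c‖⁻¹ * (x i - c i) ^ 2 := fun i => by
    have hi : HasFDerivAt (fun y : E => ρ ‖y - c‖ * (y i - c i)) _ x :=
      (hρ.comp_hasFDerivAt x (hasFDerivAt_norm_sub hx)).mul
        ((EuclideanSpace.proj (𝕜 := ℝ) i).hasFDerivAt.sub_const (c i))
    simp only [PiLp.smul_apply, PiLp.sub_apply, smul_eq_mul, hi.fderiv]
    simp only [Function.comp_apply, map_sub, add_apply, smul_apply, PiLp.proj_apply,
      PiLp.single_eq_same, smul_eq_mul, mul_one, sub_apply, coe_innerSL_apply,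
      EuclideanSpace.inner_single_right, Real.ringHom_apply, one_mul]
    ring
  have hsq : ∑ i, (x i - c i) ^ 2 = ‖x - c‖ ^ 2 := by
    rw [EuclideanSpace.norm_sq_eq]
    simp
  simp only [euclideanDiv, hcoord, Finset.sum_add_distrib, ← Finset.mul_sum, hsq,
    Finset.sum_const, Finset.card_univ, Fintype.card_fin, nsmul_eq_mul]
  field_simp

end Euclidean

theorem exists_forall_sub_le_of_tendsto_cocompact {X : Type*} [TopologicalSpace X] [Nonempty X]
    {u v : X → ℝ} (hu : Continuous u) (hbdd : BddAbove (range u)) (hv : Continuous v)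
    (hvt : Tendsto v (cocompact X) atTop) : ∃ x₀, ∀ y, u y - v y ≤ u x₀ - v x₀ := by
  obtain ⟨M, hM⟩ := hbdd
  have hlim : Tendsto (fun y => v y - u y) (cocompact X) atTop :=
    tendsto_atTop_mono (fun y => by linarith [hM (mem_range_self y)])
      (tendsto_atTop_add_const_right _ (-M) hvt)
  obtain ⟨x₀, hx₀⟩ := (hv.sub hu).exists_forall_le hlim
  exact ⟨x₀, fun y => by linarith [hx₀ y, Pi.sub_apply v u x₀, Pi.sub_apply v u y]⟩

theorem tendsto_intervalIntegral_atTop_of_div_le {W : ℝ → ℝ} (hW : Continuous W) {κ s₁ : ℝ}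
    (hκ : 0 < κ) (hs₁ : 0 < s₁) (hle : ∀ s, s₁ ≤ s → κ / s ≤ W s) :
    Tendsto (fun r => ∫ s in (0 : ℝ)..r, W s) atTop atTop := by
  have hlower : ∀ r, s₁ ≤ r →
      (∫ s in (0 : ℝ)..s₁, W s) + κ * Real.log (r / s₁) ≤ ∫ s in (0 : ℝ)..r, W s := by
    intro r hr
    have hinv : ContinuousOn (fun s => κ / s) (uIcc s₁ r) :=
      continuousOn_const.div continuousOn_id fun s hs => by
        rw [uIcc_of_le hr] at hs; exact (hs₁.trans_le hs.1).ne'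
    have hmono := integral_mono_on hr (hinv.intervalIntegrable (μ := volume))
      (hW.intervalIntegrable s₁ r) fun s hs => hle s hs.1
    rw [← integral_add_adjacent_intervals (hW.intervalIntegrable 0 s₁)
      (hW.intervalIntegrable s₁ r)]
    simp only [div_eq_mul_inv κ, intervalIntegral.integral_const_mul] at hmono
    rw [integral_inv_of_pos hs₁ (hs₁.trans_le hr)] at hmono
    linarith
  refine tendsto_atTop_mono' atTop (eventually_atTop.2 ⟨s₁, hlower⟩) ?_
  exact tendsto_atTop_add_const_left _ _
    ((Real.tendsto_log_atTop.comp (tendsto_id.atTop_div_const hs₁)).const_mul_atTop hκ)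

section RadialProfile

variable (m : ℕ) (p : ℝ) (w : ℝ → ℝ)

/- In the radial variable `r = ‖x - c‖` the p-Laplacian of `V r` is `r^(1-m) (r^(m-1) V'^(p-1))'`,
so the profile whose slope is `radialSlope` has p-Laplacian `w r`. -/
noncomputable def radialFlux (r : ℝ) : ℝ := ∫ t in (0 : ℝ)..r, t ^ (m - 1) * w t

noncomputable def radialSlope (r : ℝ) : ℝ := (radialFlux m w r / r ^ (m - 1)) ^ (p - 1)⁻¹

noncomputable def radialProfile (r : ℝ) : ℝ := ∫ s in (0 : ℝ)..r, radialSlope m p w s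

variable {m p w} (hw : Continuous w) {K : ℝ} (hw_pos : ∀ t, 0 < w t) (hw_le : ∀ t, w t ≤ K)
include hw

theorem hasDerivAt_radialFlux (r : ℝ) : HasDerivAt (radialFlux m w) (r ^ (m - 1) * w r) r :=
  ((continuous_pow (m - 1)).mul hw).integral_hasStrictDerivAt 0 r |>.hasDerivAt

omit hw in
theorem radialFlux_zero : radialFlux m w 0 = 0 := integral_same

include hw_pos in
theorem radialFlux_pos {r : ℝ} (hr : 0 < r) : 0 < radialFlux m w r :=
  intervalIntegral_pos_of_pos_on (((continuous_pow (m - 1)).mul hw).intervalIntegrable _ _)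
    (fun t ht => mul_pos (pow_pos ht.1 _) (hw_pos t)) hr

omit hw in
include hw_pos hw_le in
theorem abs_radialFlux_div_le (r : ℝ) : |radialFlux m w r / r ^ (m - 1)| ≤ K * |r| := by
  have hK : 0 ≤ K := (hw_pos 0).le.trans (hw_le 0)
  rcases eq_or_ne r 0 with rfl | hr
  · simp [radialFlux_zero]
  have hA : ‖radialFlux m w r‖ ≤ K * |r| ^ (m - 1) * |r - 0| := by
    refine intervalIntegral.norm_integral_le_of_norm_le_const fun t ht => ?_
    have ht' : |t| ≤ |r| := by
      rcases le_or_gt 0 r with h | h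
      · rw [uIoc_of_le h] at ht; rw [abs_of_pos ht.1, abs_of_nonneg h]; exact ht.2
      · rw [uIoc_of_ge h.le] at ht; rw [abs_of_nonpos ht.2, abs_of_neg h]; linarith [ht.1]
    rw [Real.norm_eq_abs, abs_mul, abs_pow, abs_of_pos (hw_pos t), mul_comm]
    exact mul_le_mul (hw_le t) (pow_le_pow_left₀ (abs_nonneg t) ht' _) (by positivity) hK
  rw [sub_zero, Real.norm_eq_abs] at hA
  rw [abs_div, abs_pow, div_le_iff₀ (by positivity)]
  linarith

include hw_pos hw_le in
theorem continuous_radialSlope (hp : 1 < p) : Continuous (radialSlope m p w) := by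
  have hG : Continuous fun r => radialFlux m w r / r ^ (m - 1) := by
    refine continuous_iff_continuousAt.2 fun r => ?_
    rcases eq_or_ne r 0 with rfl | hr
    · have hlim : Tendsto (fun r : ℝ => K * |r|) (𝓝 0) (𝓝 0) := by
        simpa using (by fun_prop : Continuous fun r : ℝ => K * |r|).tendsto (0 : ℝ)
      simpa [ContinuousAt, radialFlux_zero] using
        squeeze_zero_norm (abs_radialFlux_div_le hw_pos hw_le) hlim
    · exact (hasDerivAt_radialFlux hw r).continuousAt.div (continuousAt_pow _ _) (pow_ne_zero _ hr)
  exact hG.rpow_const fun _ => Or.inr (inv_nonneg.2 (by linarith))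

omit hw in
theorem radialSlope_zero (hp : p ≠ 1) : radialSlope m p w 0 = 0 := by
  rw [radialSlope, radialFlux_zero, zero_div, Real.zero_rpow (inv_ne_zero (sub_ne_zero.2 hp))]

include hw_pos in
theorem radialSlope_pos {r : ℝ} (hr : 0 < r) : 0 < radialSlope m p w r :=
  Real.rpow_pos_of_pos (div_pos (radialFlux_pos hw hw_pos hr) (pow_pos hr _)) _

include hw_pos in
theorem radialSlope_rpow (hp : 1 < p) {r : ℝ} (hr : 0 < r) :
    radialSlope m p w r ^ (p - 1) = radialFlux m w r / r ^ (m - 1) := by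
  rw [radialSlope, ← Real.rpow_mul (div_pos (radialFlux_pos hw hw_pos hr) (pow_pos hr _)).le,
    inv_mul_cancel₀ (by linarith), Real.rpow_one]

include hw_pos in
theorem differentiableAt_radialSlope {r : ℝ} (hr : 0 < r) :
    DifferentiableAt ℝ (radialSlope m p w) r :=
  ((hasDerivAt_radialFlux hw r).differentiableAt.div (differentiableAt_pow _)
    (pow_ne_zero _ hr.ne')).rpow_const
    (Or.inl (div_pos (radialFlux_pos hw hw_pos hr) (pow_pos hr _)).ne')

include hw_pos hw_le in
theorem hasDerivAt_radialProfile (hp : 1 < p) (r : ℝ) :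
    HasDerivAt (radialProfile m p w) (radialSlope m p w r) r :=
  (continuous_radialSlope hw hw_pos hw_le hp).integral_hasStrictDerivAt 0 r |>.hasDerivAt

include hw_pos in
theorem radialProfile_nonneg {r : ℝ} (hr : 0 ≤ r) : 0 ≤ radialProfile m p w r := by
  refine intervalIntegral.integral_nonneg hr fun s hs => ?_
  rcases hs.1.eq_or_lt with rfl | hs'
  · exact Real.rpow_nonneg (by simp [radialFlux_zero]) _
  · exact (radialSlope_pos hw hw_pos hs').le

include hw_pos in
theorem mul_le_radialFlux (hanti : AntitoneOn w (Ioi 0)) {s : ℝ} (hs : 0 < s) :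
    (s / 2) ^ (m - 1) * w s * (s / 2) ≤ radialFlux m w s := by
  have hint : ∀ a b, IntervalIntegrable (fun t => t ^ (m - 1) * w t) volume a b :=
    ((continuous_pow (m - 1)).mul hw).intervalIntegrable
  have hhalf : ∫ _ in s / 2..s, (s / 2) ^ (m - 1) * w s ≤ ∫ t in s / 2..s, t ^ (m - 1) * w t := by
    refine integral_mono_on (by linarith) intervalIntegrable_const (hint _ _) fun t ht => ?_
    have ht0 : 0 < t := by linarith [ht.1]
    exact mul_le_mul (pow_le_pow_left₀ (by linarith) ht.1 _)
      (hanti ht0 hs ht.2) (hw_pos s).le (pow_nonneg ht0.le _)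
  rw [intervalIntegral.integral_const, smul_eq_mul] at hhalf
  have hfirst := (radialFlux_pos (m := m) hw hw_pos (half_pos hs)).le
  rw [radialFlux] at hfirst ⊢
  rw [← integral_add_adjacent_intervals (hint 0 (s / 2)) (hint (s / 2) s)]
  linarith

include hw_pos in
theorem div_le_radialSlope (hp : 1 < p) (hanti : AntitoneOn w (Ioi 0)) {κ s : ℝ} (hκ : 0 < κ)
    (hs : 0 < s) (hdecay : κ ≤ s ^ p * w s) :
    ((1 / 2) ^ (m - 1) / 2 * κ) ^ (p - 1)⁻¹ / s ≤ radialSlope m p w s := by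
  have hG : (1 / 2) ^ (m - 1) / 2 * κ * s ^ (1 - p) ≤ radialFlux m w s / s ^ (m - 1) := by
    rw [le_div_iff₀ (pow_pos hs _)]
    have hsp : s ^ p * s ^ (1 - p) = s := by
      rw [← Real.rpow_add hs, add_sub_cancel, Real.rpow_one]
    calc (1 / 2) ^ (m - 1) / 2 * κ * s ^ (1 - p) * s ^ (m - 1)
        ≤ (1 / 2) ^ (m - 1) / 2 * (s ^ p * w s) * s ^ (1 - p) * s ^ (m - 1) := by gcongr
      _ = (s / 2) ^ (m - 1) * w s * (s / 2) := by
        rw [div_pow s, one_div, inv_pow]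
        linear_combination (2 ^ (m - 1))⁻¹ / 2 * w s * s ^ (m - 1) * hsp
      _ ≤ radialFlux m w s := mul_le_radialFlux hw hw_pos hanti hs
  have hexp : (1 - p) * (p - 1)⁻¹ = -1 := by
    rw [← neg_sub, neg_mul, mul_inv_cancel₀ (by linarith)]
  calc ((1 / 2) ^ (m - 1) / 2 * κ) ^ (p - 1)⁻¹ / s
      = ((1 / 2) ^ (m - 1) / 2 * κ) ^ (p - 1)⁻¹ * (s ^ (1 - p)) ^ (p - 1)⁻¹ := by
        rw [← Real.rpow_mul hs.le, hexp, Real.rpow_neg_one, div_eq_mul_inv]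
    _ = ((1 / 2) ^ (m - 1) / 2 * κ * s ^ (1 - p)) ^ (p - 1)⁻¹ :=
        (Real.mul_rpow (by positivity) (by positivity)).symm
    _ ≤ radialSlope m p w s :=
        Real.rpow_le_rpow (by positivity) hG (inv_nonneg.2 (by linarith))

include hw_pos hw_le in
theorem tendsto_radialProfile_atTop (hp : 1 < p) (hanti : AntitoneOn w (Ioi 0)) {κ : ℝ}
    (hκ : 0 < κ) (hdecay : ∀ᶠ s in atTop, κ ≤ s ^ p * w s) :
    Tendsto (radialProfile m p w) atTop atTop := by
  obtain ⟨s₁, hs₁⟩ := eventually_atTop.1 (hdecay.and (eventually_gt_atTop 0))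
  exact tendsto_intervalIntegral_atTop_of_div_le (continuous_radialSlope hw hw_pos hw_le hp)
    (by positivity) (hs₁ s₁ le_rfl).2 fun s hs =>
      div_le_radialSlope hw hw_pos hp hanti hκ (hs₁ s hs).2 (hs₁ s hs).1

end RadialProfile

section RadialBarrier

variable {m : ℕ} (p : ℝ) (w : ℝ → ℝ) (c : EuclideanSpace ℝ (Fin m))

local notation "E" => EuclideanSpace ℝ (Fin m)

noncomputable def radialBarrier (y : E) : ℝ := radialProfile m p w ‖y - c‖

noncomputable def radialBarrierGrad (y : E) : E := (radialSlope m p w ‖y - c‖ / ‖y - c‖) • (y - c)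

variable {p w} (hw : Continuous w) {K : ℝ} (hw_pos : ∀ t, 0 < w t) (hw_le : ∀ t, w t ≤ K)
  (hp : 1 < p)
include hw hw_pos hw_le hp

theorem hasGradientAt_radialBarrier_self : HasGradientAt (radialBarrier p w c) 0 c := by
  have h := hasDerivAt_radialProfile (m := m) hw hw_pos hw_le hp 0
  rw [radialSlope_zero hp.ne'] at h
  exact hasGradientAt_comp_norm_sub_self h c

theorem hasGradientAt_radialBarrier {x : E} (hx : x ≠ c) :
    HasGradientAt (radialBarrier p w c) (radialBarrierGrad p w c x) x :=
  hasGradientAt_comp_norm_sub hx (hasDerivAt_radialProfile hw hw_pos hw_le hp _)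

theorem continuous_radialBarrier : Continuous (radialBarrier p w c) :=
  (continuous_iff_continuousAt.2 fun r =>
    (hasDerivAt_radialProfile hw hw_pos hw_le hp r).continuousAt).comp (by fun_prop)

omit hw_le hp in
theorem radialBarrier_nonneg (y : E) : 0 ≤ radialBarrier p w c y :=
  radialProfile_nonneg hw hw_pos (norm_nonneg _)

omit hw hw_pos hw_le hp in
theorem radialBarrier_self : radialBarrier p w c c = 0 := by
  simp [radialBarrier, radialProfile]

theorem tendsto_radialBarrier_cocompact (hanti : AntitoneOn w (Ioi 0)) {κ : ℝ} (hκ : 0 < κ)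
    (hdecay : ∀ᶠ s in atTop, κ ≤ s ^ p * w s) :
    Tendsto (radialBarrier p w c) (cocompact E) atTop :=
  (tendsto_radialProfile_atTop hw hw_pos hw_le hp hanti hκ hdecay).comp
    (tendsto_norm_cocompact_atTop.comp (Homeomorph.subRight c).isClosedEmbedding.tendsto_cocompact)

variable {c}

omit hw_le hp in
theorem radialBarrierGrad_ne_zero {x : E} (hx : x ≠ c) : radialBarrierGrad p w c x ≠ 0 := by
  have hr : 0 < ‖x - c‖ := norm_pos_iff.2 (sub_ne_zero.2 hx)
  exact smul_ne_zero (div_pos (radialSlope_pos hw hw_pos hr) hr).ne' (sub_ne_zero.2 hx)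

omit hw_le hp in
theorem differentiableAt_radialBarrierGrad {x : E} (hx : x ≠ c) :
    DifferentiableAt ℝ (radialBarrierGrad p w c) x := by
  have hr : 0 < ‖x - c‖ := norm_pos_iff.2 (sub_ne_zero.2 hx)
  have hslope : DifferentiableAt ℝ (fun s => radialSlope m p w s / s) ‖x - c‖ :=
    (differentiableAt_radialSlope hw hw_pos hr).div differentiableAt_id hr.ne'
  exact (hslope.comp x (hasFDerivAt_norm_sub hx).differentiableAt).smul
    (differentiableAt_id.sub_const c)

omit hw_le in
theorem norm_rpow_smul_radialBarrierGrad (hm : 1 ≤ m) (y : E) :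
    ‖radialBarrierGrad p w c y‖ ^ (p - 2) • radialBarrierGrad p w c y =
      (radialFlux m w ‖y - c‖ / ‖y - c‖ ^ m) • (y - c) := by
  rcases eq_or_ne y c with rfl | hy
  · simp [radialBarrierGrad]
  have hr : 0 < ‖y - c‖ := norm_pos_iff.2 (sub_ne_zero.2 hy)
  have hW := radialSlope_pos (m := m) (p := p) hw hw_pos hr
  have hnorm : ‖radialBarrierGrad p w c y‖ = radialSlope m p w ‖y - c‖ := by
    rw [radialBarrierGrad, norm_smul, Real.norm_eq_abs, abs_of_pos (div_pos hW hr),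
      div_mul_cancel₀ _ hr.ne']
  rw [hnorm, radialBarrierGrad, smul_smul, ← mul_div_assoc, ← Real.rpow_add_one hW.ne',
    show p - 2 + 1 = p - 1 by ring, radialSlope_rpow hw hw_pos hp hr, div_div, ← pow_succ,
    Nat.sub_add_cancel hm]

omit hw_le in
theorem euclideanDiv_radialBarrierGrad (hm : 1 ≤ m) {x : E} (hx : x ≠ c) :
    euclideanDiv (fun y => ‖radialBarrierGrad p w c y‖ ^ (p - 2) • radialBarrierGrad p w c y) x
      = w ‖x - c‖ := by
  have hr : 0 < ‖x - c‖ := norm_pos_iff.2 (sub_ne_zero.2 hx)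
  have hρ := (hasDerivAt_radialFlux (m := m) hw ‖x - c‖).div (hasDerivAt_pow m ‖x - c‖)
    (pow_ne_zero m hr.ne')
  simp only [norm_rpow_smul_radialBarrierGrad hw hw_pos hp hm]
  rw [euclideanDiv_smul_sub (ρ := fun s => radialFlux m w s / s ^ m) hx hρ]
  set r := ‖x - c‖
  have hpow : r ^ m = r ^ (m - 1) * r := by rw [← pow_succ, Nat.sub_add_cancel hm]
  rw [hpow]
  field_simp
  ring

end RadialBarrier

section Comparison

variable {m : ℕ} {p : ℝ} {w : ℝ → ℝ} {c : EuclideanSpace ℝ (Fin m)}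
  (hm : 1 ≤ m) (hp : 2 ≤ p) (hw : Continuous w) {K : ℝ} (hw_pos : ∀ t, 0 < w t)
  (hw_le : ∀ t, w t ≤ K)
include hm hp hw hw_pos hw_le

local notation "E" => EuclideanSpace ℝ (Fin m)

theorem pLaplacian_le_of_isLocalMax_sub_radialBarrier {u : E → ℝ} {x₀ : E} (hu : ContDiff ℝ 2 u)
    (hc : gradient u c ≠ 0) (hmax : IsLocalMax (fun y => u y - radialBarrier p w c y) x₀) :
    pLaplacian p u x₀ ≤ w ‖x₀ - c‖ := by
  have hp1 : 1 < p := by linarith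
  -- the barrier has a critical point at `c`, where `u` has none
  have hx₀ : x₀ ≠ c := by
    rintro rfl
    exact hc (hmax.eq_of_hasGradientAt_sub (hu.differentiable (by norm_num) x₀).hasGradientAt
      (hasGradientAt_radialBarrier_self x₀ hw hw_pos hw_le hp1))
  have hv : ∀ᶠ y in 𝓝 x₀, HasGradientAt (radialBarrier p w c) (radialBarrierGrad p w c y) y :=
    (eventually_ne_nhds hx₀).mono fun y hy => hasGradientAt_radialBarrier c hw hw_pos hw_le hp1 hy
  calc pLaplacian p u x₀
      ≤ euclideanDiv (fun y => ‖radialBarrierGrad p w c y‖ ^ (p - 2) • radialBarrierGrad p w c y)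
          x₀ :=
        pLaplacian_le_of_isLocalMax_sub hp hu hv (differentiableAt_radialBarrierGrad hw hw_pos hx₀)
          (radialBarrierGrad_ne_zero hw hw_pos hx₀) hmax
    _ = w ‖x₀ - c‖ := euclideanDiv_radialBarrierGrad hw hw_pos hp1 hm hx₀

theorem exists_pLaplacian_le_of_gradient_ne_zero {u : E → ℝ} (hu : ContDiff ℝ 2 u)
    (hbdd : BddAbove (range u)) (hc : gradient u c ≠ 0) (hanti : AntitoneOn w (Ioi 0))
    {κ : ℝ} (hκ : 0 < κ) (hdecay : ∀ᶠ s in atTop, κ ≤ s ^ p * w s) :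
    ∃ x₀, u c ≤ u x₀ ∧ pLaplacian p u x₀ ≤ w ‖x₀ - c‖ := by
  have hp1 : 1 < p := by linarith
  obtain ⟨x₀, hx₀⟩ := exists_forall_sub_le_of_tendsto_cocompact hu.continuous hbdd
    (continuous_radialBarrier c hw hw_pos hw_le hp1)
    (tendsto_radialBarrier_cocompact c hw hw_pos hw_le hp1 hanti hκ hdecay)
  refine ⟨x₀, ?_, pLaplacian_le_of_isLocalMax_sub_radialBarrier hm hp hw hw_pos hw_le hu hc
    (Eventually.of_forall hx₀)⟩
  have := hx₀ c
  rw [radialBarrier_self, sub_zero] at this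
  linarith [radialBarrier_nonneg (p := p) c hw hw_pos x₀]

end Comparison

section Majorant

variable {Q : ℝ → ℝ} (hQmono : MonotoneOn Q (Ioi 0))

/- Averaging `Q` over a unit interval makes it continuous without losing monotonicity; the shift
`a` lets `avgMajorant Q ‖c‖ ‖x - c‖` dominate `Q ‖x‖`. -/
noncomputable def avgMajorant (Q : ℝ → ℝ) (a s : ℝ) : ℝ :=
  ∫ t in (s + a)..(s + a + 1), Q (max t 1)

include hQmono

theorem monotone_comp_max_one : Monotone fun t => Q (max t 1) := fun s t hst =>
  hQmono (lt_of_lt_of_le one_pos (le_max_right s 1)) (lt_of_lt_of_le one_pos (le_max_right t 1))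
    (max_le_max hst le_rfl)

theorem continuous_avgMajorant (a : ℝ) : Continuous (avgMajorant Q a) := by
  have hint : ∀ x y, IntervalIntegrable (fun t => Q (max t 1)) volume x y := fun _ _ =>
    (monotone_comp_max_one hQmono).intervalIntegrable
  have hF : Continuous fun x => ∫ t in (0 : ℝ)..x, Q (max t 1) :=
    continuous_primitive hint 0
  have hdiff : avgMajorant Q a = fun s =>
      (∫ t in (0 : ℝ)..(s + a + 1), Q (max t 1)) - ∫ t in (0 : ℝ)..(s + a), Q (max t 1) :=
    funext fun s => (integral_interval_sub_left (hint _ _) (hint _ _)).symm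
  rw [hdiff]
  exact (hF.comp (by fun_prop)).sub (hF.comp (by fun_prop))

theorem le_avgMajorant (a s : ℝ) : Q (max (s + a) 1) ≤ avgMajorant Q a s := by
  have h := integral_mono_on (by linarith) intervalIntegrable_const
    ((monotone_comp_max_one hQmono).intervalIntegrable (μ := volume) (a := s + a) (b := s + a + 1))
    fun t ht => monotone_comp_max_one hQmono ht.1
  simpa [avgMajorant] using h

theorem avgMajorant_le (a s : ℝ) : avgMajorant Q a s ≤ Q (max (s + a + 1) 1) := by
  have h := integral_mono_on (by linarith)
    ((monotone_comp_max_one hQmono).intervalIntegrable (μ := volume) (a := s + a) (b := s + a + 1))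
    intervalIntegrable_const fun t ht => monotone_comp_max_one hQmono ht.2
  simpa [avgMajorant] using h

theorem monotone_avgMajorant (a : ℝ) : Monotone (avgMajorant Q a) := by
  have hshift : ∀ s, avgMajorant Q a s = ∫ t in (0 : ℝ)..1, Q (max (t + (s + a)) 1) := fun s => by
    rw [intervalIntegral.integral_comp_add_right (fun t => Q (max t 1)), zero_add, avgMajorant,
      add_comm 1]
  intro s s' hss'
  rw [hshift, hshift]
  refine integral_mono_on zero_le_one ?_ ?_ fun t _ => monotone_comp_max_one hQmono (by linarith)
  · exact ((monotone_comp_max_one hQmono).comp (monotone_id.add_const _)).intervalIntegrable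
  · exact ((monotone_comp_max_one hQmono).comp (monotone_id.add_const _)).intervalIntegrable

theorem eventually_avgMajorant_le {p : ℝ} (hp : 0 ≤ p) (hQo : Q =o[atTop] fun t => t ^ p)
    (a : ℝ) :
    ∀ᶠ s in atTop, avgMajorant Q a s ≤ 2 ^ p * s ^ p := by
  have hbound := (tendsto_atTop_add_const_right _ (a + 1) tendsto_id).eventually
    (hQo.bound one_pos)
  filter_upwards [hbound, eventually_ge_atTop (|a| + 1)] with s hs hsa
  have ha := le_abs_self a
  have ha' := neg_abs_le a
  calc avgMajorant Q a s ≤ Q (s + a + 1) := by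
        simpa [max_eq_left (by linarith : 1 ≤ s + a + 1)] using avgMajorant_le hQmono a s
    _ ≤ (s + a + 1) ^ p := by
        simpa [abs_of_nonneg (Real.rpow_nonneg (by linarith : 0 ≤ s + a + 1) p), ← add_assoc]
          using (le_abs_self _).trans hs
    _ ≤ (2 * s) ^ p := Real.rpow_le_rpow (by linarith) (by linarith) hp
    _ = 2 ^ p * s ^ p := Real.mul_rpow zero_le_two (by linarith)

end Majorant

theorem one_div_max_norm_one_le {F : Type*} [NormedAddCommGroup F] [NormedSpace ℝ F]
    [Nontrivial F] {Q : ℝ → ℝ} {b : F → ℝ} (hQpos : ∀ t > (0 : ℝ), 0 < Q t)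
    (hQmono : MonotoneOn Q (Ioi 0)) (hb : Continuous b) (hbQ : ∀ x : F, 0 < ‖x‖ → 1 / Q ‖x‖ ≤ b x)
    (x : F) : 1 / Q (max ‖x‖ 1) ≤ b x := by
  have hle : ∀ y : F, y ≠ 0 → 1 / Q (max ‖y‖ 1) ≤ b y := fun y hy => by
    have hy' := norm_pos_iff.2 hy
    exact (one_div_le_one_div_of_le (hQpos _ hy')
      (hQmono hy' (one_pos.trans_le (le_max_right ‖y‖ 1)) (le_max_left _ _))).trans (hbQ y hy')
  rcases eq_or_ne x 0 with rfl | hx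
  · have hnear : ∀ᶠ y in 𝓝[≠] (0 : F), 1 / Q 1 ≤ b y := by
      filter_upwards [self_mem_nhdsWithin, nhdsWithin_le_nhds (Metric.ball_mem_nhds 0 one_pos)]
        with y hy hy1
      simpa [max_eq_right (mem_ball_zero_iff.1 hy1).le] using hle y hy
    simpa using ge_of_tendsto (hb.continuousAt.tendsto.mono_left nhdsWithin_le_nhds) hnear
  · exact hle x hx

theorem exists_pLaplacian_le_div_of_gradient_ne_zero {m : ℕ} {p : ℝ} {Q : ℝ → ℝ} (hm : 1 ≤ m)
    (hp : 2 ≤ p) (hQpos : ∀ t > (0 : ℝ), 0 < Q t) (hQmono : MonotoneOn Q (Ioi 0))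
    (hQo : Q =o[atTop] fun t => t ^ p) {u : EuclideanSpace ℝ (Fin m) → ℝ} (hu : ContDiff ℝ 2 u)
    (hbdd : BddAbove (range u)) {c : EuclideanSpace ℝ (Fin m)} (hc : gradient u c ≠ 0) {δ : ℝ}
    (hδ : 0 < δ) : ∃ x₀, u c ≤ u x₀ ∧ pLaplacian p u x₀ ≤ δ / Q (max ‖x₀‖ 1) := by
  have hmax_pos : ∀ s : ℝ, 0 < max s 1 := fun s => one_pos.trans_le (le_max_right s 1)
  have hQ_le : ∀ s, Q 1 ≤ avgMajorant Q ‖c‖ s := fun s =>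
    (hQmono (mem_Ioi.2 one_pos) (hmax_pos (s + ‖c‖)) (le_max_right _ 1)).trans
      (le_avgMajorant hQmono _ _)
  have hpos : ∀ s, 0 < avgMajorant Q ‖c‖ s := fun s => (hQpos 1 one_pos).trans_le (hQ_le s)
  have hdecay : ∀ᶠ s in atTop, δ / 2 ^ p ≤ s ^ p * (δ / avgMajorant Q ‖c‖ s) := by
    filter_upwards [eventually_avgMajorant_le hQmono (by linarith) hQo ‖c‖] with s hs
    rw [mul_div_assoc', le_div_iff₀ (hpos s), div_mul_eq_mul_div, div_le_iff₀ (by positivity)]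
    nlinarith
  obtain ⟨x₀, hux₀, hx₀⟩ :=
    exists_pLaplacian_le_of_gradient_ne_zero (w := fun s => δ / avgMajorant Q ‖c‖ s) hm hp
    (continuous_const.div (continuous_avgMajorant hQmono _) fun s => (hpos s).ne')
    (fun t => div_pos hδ (hpos t))
    (fun t => div_le_div_of_nonneg_left hδ.le (hQpos 1 one_pos) (hQ_le t)) hu hbdd hc
    (fun s _ t _ hst =>
      div_le_div_of_nonneg_left hδ.le (hpos s) (monotone_avgMajorant hQmono _ hst))
    (by positivity) hdecay
  refine ⟨x₀, hux₀, hx₀.trans (div_le_div_of_nonneg_left hδ.le (hQpos _ (hmax_pos _)) ?_)⟩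
  exact (hQmono (hmax_pos _) (hmax_pos _) (max_le_max (norm_le_norm_sub_add x₀ c) le_rfl)).trans
    (le_avgMajorant hQmono _ _)

theorem exists_pLaplacian_le_div_of_lt_iSup {m : ℕ} {p : ℝ} {Q : ℝ → ℝ} (hm : 1 ≤ m)
    (hp : 2 ≤ p) (hQpos : ∀ t > (0 : ℝ), 0 < Q t) (hQmono : MonotoneOn Q (Ioi 0))
    (hQo : Q =o[atTop] fun t => t ^ p) {u : EuclideanSpace ℝ (Fin m) → ℝ} (hu : ContDiff ℝ 2 u)
    (hbdd : BddAbove (range u)) {γ : ℝ} (hγ : γ < ⨆ x, u x) {δ : ℝ} (hδ : 0 < δ) :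
    ∃ x, γ < u x ∧ pLaplacian p u x ≤ δ / Q (max ‖x‖ 1) := by
  by_cases hcrit : ∃ c, γ < u c ∧ gradient u c ≠ 0
  · obtain ⟨c, hcu, hc⟩ := hcrit
    obtain ⟨x₀, hx₀, hlap⟩ :=
      exists_pLaplacian_le_div_of_gradient_ne_zero hm hp hQpos hQmono hQo hu hbdd hc hδ
    exact ⟨x₀, hcu.trans_le hx₀, hlap⟩
  · push Not at hcrit
    obtain ⟨x, hx⟩ := exists_lt_of_lt_ciSup hγ
    have hflat : ∀ᶠ y in 𝓝 x, gradient u y = 0 :=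
      ((isOpen_lt continuous_const hu.continuous).eventually_mem hx).mono hcrit
    refine ⟨x, hx, ?_⟩
    rw [pLaplacian_eq_zero_of_eventually_gradient_eq_zero p hflat]
    exact div_nonneg hδ.le (hQpos _ (one_pos.trans_le (le_max_right _ _))).le

theorem stmt4_general {m : ℕ} (hm : 2 ≤ m) (p : ℝ) (hp : 2 ≤ p)
    (Q : ℝ → ℝ)
    (hQpos : ∀ t > (0:ℝ), 0 < Q t)
    (hQmono : ∀ s t : ℝ, 0 < s → s ≤ t → Q s ≤ Q t)
    (hQo : Q =o[atTop] fun t => t ^ p)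
    (b : EuclideanSpace ℝ (Fin m) → ℝ) (hb : Continuous b)
    (hbQ : ∀ x : EuclideanSpace ℝ (Fin m), 0 < ‖x‖ → 1 / Q ‖x‖ ≤ b x)
    (f : ℝ → ℝ) (hf : Continuous f)
    (u : EuclideanSpace ℝ (Fin m) → ℝ) (hu : ContDiff ℝ 2 u)
    (hbdd : BddAbove (Set.range u))
    (γ : ℝ) (hγ : γ < ⨆ x, u x)
    (hineq : ∀ x : EuclideanSpace ℝ (Fin m), γ < u x →
      b x * f (u x) ≤ pLaplacian p u x) :
    f (⨆ x, u x) ≤ 0 := by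
  set M := ⨆ x, u x
  by_contra! hfM
  have : Nonempty (Fin m) := ⟨⟨0, by omega⟩⟩
  have hQmono' : MonotoneOn Q (Ioi 0) := fun s hs t _ hst => hQmono s t hs hst
  obtain ⟨γ', ⟨hγγ', hγ'M⟩, hγ'⟩ := exists_Ioc_subset_of_mem_nhds'
    (hf.continuousAt.eventually (lt_mem_nhds (half_lt_self hfM))) hγ
  obtain ⟨x, hx, hlap⟩ := exists_pLaplacian_le_div_of_lt_iSup (by omega) hp hQpos hQmono' hQo hu
    hbdd hγ'M (by positivity : 0 < f M / 4)
  have hQx := hQpos _ (one_pos.trans_le (le_max_right ‖x‖ 1))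
  have hbx := one_div_max_norm_one_le hQpos hQmono' hb hbQ x
  have hfx : f M / 2 < f (u x) := hγ' ⟨hx, le_ciSup hbdd x⟩
  have hlower : f M / 2 / Q (max ‖x‖ 1) ≤ b x * f (u x) := by
    rw [div_eq_mul_one_div, mul_comm]
    exact mul_le_mul hbx hfx.le (by positivity) ((by positivity : (0 : ℝ) ≤ 1 / _).trans hbx)
  have := (hlower.trans (hineq x (hγγ'.trans_lt hx))).trans hlap
  rw [div_le_div_iff_of_pos_right hQx] at this
  linarith

theorem stmt4 {m : ℕ} (hm : 2 ≤ m) (p : ℝ) (hp : 2 ≤ p)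
    (Q : ℝ → ℝ)
    (hQpos : ∀ t > (0:ℝ), 0 < Q t)
    (hQmono : ∀ s t : ℝ, 0 < s → s ≤ t → Q s ≤ Q t)
    (hQo : Q =o[atTop] fun t => t ^ p)
    (hliminf : ∃ C : ℝ, ∃ᶠ r in atTop, Q r * Real.log r / r ^ p ≤ C)
    (b : EuclideanSpace ℝ (Fin m) → ℝ) (hb : Continuous b)
    (hbQ : ∀ x : EuclideanSpace ℝ (Fin m), 0 < ‖x‖ → 1 / Q ‖x‖ ≤ b x)
    (f : ℝ → ℝ) (hf : Continuous f)
    (u : EuclideanSpace ℝ (Fin m) → ℝ) (hu : ContDiff ℝ 2 u)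
    (hbdd : BddAbove (Set.range u))
    (γ : ℝ) (hγ : γ < ⨆ x, u x)
    (hineq : ∀ x : EuclideanSpace ℝ (Fin m), γ < u x →
      b x * f (u x) ≤ pLaplacian p u x) :
    f (⨆ x, u x) ≤ 0 :=
  stmt4_general hm p hp Q hQpos hQmono hQo b hb hbQ f hf u hu hbdd γ hγ hineq
end

section
/- Let m ≥ 2, σ > 1, and let Q : (0,∞) → ℝ be a positive non-decreasing function with Q(t) = o(t²) as t → +∞ and liminf_{r→+∞} Q(r)·(log r)/r² < +∞. Let a, b : ℝ^m → ℝ be continuous functions such that b(x) ≥ 1/Q(|x|) for |x| > 0 and a(x) ≥ 0 for all x ∈ ℝ^m. If u ∈ C²(ℝ^m) is a non-negative function satisfying Δu(x) ≥ b(x) u(x)^σ + a(x) u(x) for all x ∈ ℝ^m, then u is identically zero. -/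
/-!
Keller–Osserman comparison. Fix `x₀` and `R > 0`; on `ball x₀ R` we have
`b ≥ c := 1 / Q (‖x₀‖ + R)`, hence `Δu ≥ c u ^ σ`. With `β = 2 / (σ - 1)` the barrier
`w = A (R² - ‖x - x₀‖²) ^ (-β)` blows up on the sphere, and the sum of its second derivatives along
the coordinate lines is at most `A K R² (R² - ‖x - x₀‖²) ^ (-β - 2)` with `K = β (2m + 4(β + 1))`;
this equals `c w ^ σ` once `A ^ (σ - 1) = K R² / c`. At an interior maximum of `u - w` where
`u > w` we would get `c u ^ σ ≤ Δu ≤ c w ^ σ < c u ^ σ`. Hence `u x₀ ≤ w x₀`, i.e.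
`u x₀ ^ (σ - 1) ≤ K Q (‖x₀‖ + R) / R²`, which tends to `0` as `R → ∞` because `Q = o(t²)`.
-/

open Filter Asymptotics

open Topology Metric
open scoped RealInnerProductSpace

theorem IsLocalMax.second_deriv_nonpos {f f' : ℝ → ℝ} {a f'' : ℝ} (h : IsLocalMax f a)
    (hf : ∀ᶠ x in 𝓝 a, HasDerivAt f (f' x) x) (hf' : HasDerivAt f' f'' a) : f'' ≤ 0 := by
  by_contra! hpos
  -- Subtracting `f'' / 4 * (x - a) ^ 2` keeps the second derivative positive, so `a` becomes a
  -- local minimum; together with the local maximum this forces `(x - a) ^ 2 ≤ 0` near `a`.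
  set g : ℝ → ℝ := fun x => f x - f'' / 4 * (x - a) ^ 2
  set g' : ℝ → ℝ := fun x => f' x - f'' / 2 * (x - a)
  have hg : ∀ᶠ x in 𝓝 a, HasDerivAt g (g' x) x := by
    filter_upwards [hf] with x hx
    exact (hx.sub ((((hasDerivAt_id' x).sub_const a).fun_pow 2).const_mul (f'' / 4))).congr_deriv
      (by simp; ring)
  have hg' : HasDerivAt g' (f'' / 2) a :=
    (hf'.sub (((hasDerivAt_id' a).sub_const a).const_mul (f'' / 2))).congr_deriv (by ring)
  have hderiv : deriv g =ᶠ[𝓝 a] g' := hg.mono fun x hx => hx.deriv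
  have hmin : IsLocalMin g a := by
    refine isLocalMin_of_deriv_deriv_pos ?_ ?_ hg.self_of_nhds.continuousAt
    · rw [hderiv.deriv_eq, hg'.deriv]
      positivity
    · simp [hderiv.self_of_nhds, g', h.hasDerivAt_eq_zero hf.self_of_nhds]
  have hcenter : ∀ᶠ x in 𝓝 a, x = a := by
    filter_upwards [h, hmin] with x hfx hgx
    have : f'' / 4 * (x - a) ^ 2 ≤ 0 := by
      simp only [g] at hgx
      linarith
    have hsq : (x - a) ^ 2 ≤ 0 := by nlinarith
    simpa [sub_eq_zero] using le_antisymm hsq (sq_nonneg _)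
  obtain ⟨x, hxa, hne⟩ :=
    ((hcenter.filter_mono nhdsWithin_le_nhds).and (self_mem_nhdsWithin (s := {a}ᶜ))).exists
  exact hne hxa

section Lines

variable {E : Type*} [NormedAddCommGroup E] [NormedSpace ℝ E]

theorem hasDerivAt_comp_add_smul {u : E → ℝ} {y e : E} {t : ℝ}
    (hu : DifferentiableAt ℝ u (y + t • e)) :
    HasDerivAt (fun s : ℝ => u (y + s • e)) (fderiv ℝ u (y + t • e) e) t :=
  hu.hasFDerivAt.comp_hasDerivAt t
    (((hasDerivAt_id t).smul_const e).const_add y |>.congr_deriv (by simp))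

theorem ContDiff.hasDerivAt_fderiv_apply_comp_add_smul {u : E → ℝ} (hu : ContDiff ℝ 2 u)
    (y e : E) :
    HasDerivAt (fun t : ℝ => fderiv ℝ u (y + t • e) e)
      (fderiv ℝ (fun z => fderiv ℝ u z e) y e) 0 := by
  have hdu : Differentiable ℝ (fun z => fderiv ℝ u z e) :=
    ((hu.fderiv_right (m := 1) le_rfl).differentiable one_ne_zero).clm_apply
      (differentiable_const e)
  simpa using hasDerivAt_comp_add_smul (t := 0) (hdu (y + (0 : ℝ) • e))

theorem ContDiff.fderiv_fderiv_apply_le_of_isLocalMax {u : E → ℝ} (hu : ContDiff ℝ 2 u)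
    {g g' : ℝ → ℝ} {g'' : ℝ} {y e : E} (hmax : IsLocalMax (fun t => u (y + t • e) - g t) 0)
    (hg : ∀ᶠ t in 𝓝 0, HasDerivAt g (g' t) t) (hg' : HasDerivAt g' g'' 0) :
    fderiv ℝ (fun z => fderiv ℝ u z e) y e ≤ g'' := by
  have := hmax.second_deriv_nonpos
    (hg.mono fun t ht => (hasDerivAt_comp_add_smul ((hu.differentiable two_ne_zero) _)).sub ht)
    ((hu.hasDerivAt_fderiv_apply_comp_add_smul y e).sub hg')
  linarith

end Lines

section Quadratic

variable (A β p c a : ℝ)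

theorem hasDerivAt_mul_quadratic_rpow {t : ℝ} (ht : 0 < p - 2 * c * t - a * t ^ 2) :
    HasDerivAt (fun t => A * (p - 2 * c * t - a * t ^ 2) ^ (-β))
      (A * β * (2 * c + 2 * a * t) * (p - 2 * c * t - a * t ^ 2) ^ (-β - 1)) t := by
  have hq : HasDerivAt (fun t => p - 2 * c * t - a * t ^ 2) (-(2 * c + 2 * a * t)) t := by
    have := ((hasDerivAt_id' t).const_mul (2 * c)).const_sub p |>.sub
      ((hasDerivAt_pow 2 t).const_mul a)
    exact this.congr_deriv (by simp; ring)
  exact ((hq.rpow_const (Or.inl ht.ne')).const_mul A).congr_deriv (by ring)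

theorem hasDerivAt_deriv_mul_quadratic_rpow (hp : 0 < p) :
    HasDerivAt (fun t => A * β * (2 * c + 2 * a * t) * (p - 2 * c * t - a * t ^ 2) ^ (-β - 1))
      (A * β * (2 * a * p + 4 * (β + 1) * c ^ 2) * p ^ (-β - 2)) 0 := by
  have hq : HasDerivAt (fun t => p - 2 * c * t - a * t ^ 2) (-(2 * c)) 0 := by
    have := ((hasDerivAt_id' (0 : ℝ)).const_mul (2 * c)).const_sub p |>.sub
      ((hasDerivAt_pow 2 (0 : ℝ)).const_mul a)
    exact this.congr_deriv (by simp)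
  have hl : HasDerivAt (fun t : ℝ => A * β * (2 * c + 2 * a * t)) (A * β * (2 * a)) 0 :=
    (((hasDerivAt_id' (0 : ℝ)).const_mul (2 * a)).const_add (2 * c)).const_mul (A * β)
      |>.congr_deriv (by ring)
  refine (hl.mul (hq.rpow_const (p := -β - 1) (Or.inl (by simpa using hp.ne')))).congr_deriv ?_
  have hsplit : p ^ (-β - 1) = p * p ^ (-β - 2) := by
    rw [show -β - 1 = 1 + (-β - 2) by ring, Real.rpow_add hp, Real.rpow_one]
  simp only [mul_zero, sub_zero, zero_pow two_ne_zero, add_zero]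
  rw [show -β - 1 - 1 = -β - 2 by ring, hsplit]
  ring

end Quadratic

section Barrier

variable {E : Type*} [NormedAddCommGroup E]

theorem sq_sub_norm_sq_pos {v : E} {R : ℝ} (hv : ‖v‖ < R) : 0 < R ^ 2 - ‖v‖ ^ 2 :=
  sub_pos.2 (pow_lt_pow_left₀ hv (norm_nonneg _) two_ne_zero)

-- Only meaningful on `ball x₀ R`: elsewhere the base of `rpow` is non-positive.
noncomputable def barrier (x₀ : E) (R A β : ℝ) (z : E) : ℝ :=
  A * (R ^ 2 - ‖z - x₀‖ ^ 2) ^ (-β)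

theorem continuousOn_barrier (x₀ : E) {R r : ℝ} (hr : r < R) (A β : ℝ) :
    ContinuousOn (barrier x₀ R A β) (closedBall x₀ r) :=
  continuousOn_const.mul <| ContinuousOn.rpow_const (by fun_prop) fun z hz =>
    Or.inl (sq_sub_norm_sq_pos ((mem_closedBall_iff_norm.1 hz).trans_lt hr)).ne'

variable {F : Type*} [NormedAddCommGroup F] [InnerProductSpace ℝ F]

theorem barrier_add_smul (x₀ y e : F) (R A β t : ℝ) :
    barrier x₀ R A β (y + t • e) =
      A * ((R ^ 2 - ‖y - x₀‖ ^ 2) - 2 * ⟪y - x₀, e⟫ * t - ‖e‖ ^ 2 * t ^ 2) ^ (-β) := by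
  rw [barrier, add_sub_right_comm, norm_add_sq_real, real_inner_smul_right, norm_smul,
    mul_pow, Real.norm_eq_abs, sq_abs]
  ring_nf

theorem fderiv_fderiv_apply_le_of_isLocalMax_sub_barrier {u : F → ℝ} (hu : ContDiff ℝ 2 u)
    {x₀ y : F} {R A β : ℝ} (hy : ‖y - x₀‖ < R)
    (hmax : IsLocalMax (fun z => u z - barrier x₀ R A β z) y) (e : F) :
    fderiv ℝ (fun z => fderiv ℝ u z e) y e ≤
      A * β * (2 * ‖e‖ ^ 2 * (R ^ 2 - ‖y - x₀‖ ^ 2) + 4 * (β + 1) * ⟪y - x₀, e⟫ ^ 2) *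
        (R ^ 2 - ‖y - x₀‖ ^ 2) ^ (-β - 2) := by
  set p := R ^ 2 - ‖y - x₀‖ ^ 2
  have hp : 0 < p := sq_sub_norm_sq_pos hy
  have hq : ∀ᶠ t in 𝓝 (0 : ℝ), 0 < p - 2 * ⟪y - x₀, e⟫ * t - ‖e‖ ^ 2 * t ^ 2 := by
    have hcont : Continuous (fun t : ℝ => p - 2 * ⟪y - x₀, e⟫ * t - ‖e‖ ^ 2 * t ^ 2) := by
      fun_prop
    exact hcont.continuousAt.eventually (lt_mem_nhds (by simpa using hp))
  refine hu.fderiv_fderiv_apply_le_of_isLocalMax ?_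
    (hq.mono fun t ht => hasDerivAt_mul_quadratic_rpow A β p _ _ ht)
    (hasDerivAt_deriv_mul_quadratic_rpow A β p _ _ hp)
  have hline : ContinuousAt (fun t : ℝ => y + t • e) 0 := by fun_prop
  have hmax' : IsLocalMax (fun z => u z - barrier x₀ R A β z) (y + (0 : ℝ) • e) := by
    simpa using hmax
  simpa [Function.comp_def, barrier_add_smul] using
    hmax'.comp_continuous (g := fun t : ℝ => y + t • e) hline

end Barrier

theorem euclideanLaplacian_le_of_isLocalMax_sub_barrier {m : ℕ}
    {u : EuclideanSpace ℝ (Fin m) → ℝ} (hu : ContDiff ℝ 2 u) {x₀ y : EuclideanSpace ℝ (Fin m)}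
    {R A β : ℝ} (hA : 0 ≤ A) (hβ : 0 ≤ β) (hy : ‖y - x₀‖ < R)
    (hmax : IsLocalMax (fun z => u z - barrier x₀ R A β z) y) :
    euclideanLaplacian u y ≤
      A * β * (2 * m + 4 * (β + 1)) * R ^ 2 * (R ^ 2 - ‖y - x₀‖ ^ 2) ^ (-β - 2) := by
  set p := R ^ 2 - ‖y - x₀‖ ^ 2
  have hsum : ∑ i, (y - x₀) i ^ 2 = ‖y - x₀‖ ^ 2 := by
    simp [EuclideanSpace.norm_sq_eq]
  have hterm : ∀ i, 2 * ‖EuclideanSpace.single i (1 : ℝ)‖ ^ 2 * p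
      + 4 * (β + 1) * ⟪y - x₀, EuclideanSpace.single i 1⟫ ^ 2
      = 2 * p + 4 * (β + 1) * (y - x₀) i ^ 2 := by
    simp [PiLp.norm_single, EuclideanSpace.inner_single_right]
  calc euclideanLaplacian u y
      ≤ ∑ i, A * β * (2 * ‖EuclideanSpace.single i (1 : ℝ)‖ ^ 2 * p
          + 4 * (β + 1) * ⟪y - x₀, EuclideanSpace.single i 1⟫ ^ 2) * p ^ (-β - 2) :=
        Finset.sum_le_sum fun i _ => fderiv_fderiv_apply_le_of_isLocalMax_sub_barrier hu hy hmax _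
    _ = A * β * (2 * m * p + 4 * (β + 1) * ‖y - x₀‖ ^ 2) * p ^ (-β - 2) := by
        simp only [hterm, ← Finset.sum_mul, ← Finset.mul_sum, Finset.sum_add_distrib,
          Finset.sum_const, Finset.card_univ, Fintype.card_fin, nsmul_eq_mul, hsum]
        ring
    _ ≤ A * β * ((2 * m + 4 * (β + 1)) * R ^ 2) * p ^ (-β - 2) := by
        have := Real.rpow_pos_of_pos (sq_sub_norm_sq_pos hy) (-β - 2)
        gcongr
        nlinarith [sq_nonneg ‖y - x₀‖, sq_sub_norm_sq_pos hy]
    _ = A * β * (2 * m + 4 * (β + 1)) * R ^ 2 * p ^ (-β - 2) := by ring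

theorem exists_isLocalMax_sub_of_le_on_sphere {X : Type*} [PseudoMetricSpace X] [ProperSpace X]
    {u w : X → ℝ} {x₀ : X} {r : ℝ} (hr : 0 ≤ r) (hu : ContinuousOn u (closedBall x₀ r))
    (hw : ContinuousOn w (closedBall x₀ r)) (hsphere : ∀ z ∈ sphere x₀ r, u z ≤ w z)
    (hx₀ : w x₀ < u x₀) : ∃ y ∈ ball x₀ r, w y < u y ∧ IsLocalMax (fun z => u z - w z) y := by
  obtain ⟨y, hy, hmax⟩ :=
    (isCompact_closedBall x₀ r).exists_isMaxOn ⟨x₀, mem_closedBall_self hr⟩ (hu.sub hw)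
  have hlt : w y < u y := by
    have : u x₀ - w x₀ ≤ u y - w y := hmax (mem_closedBall_self hr)
    linarith
  have hyball : y ∈ ball x₀ r :=
    (mem_closedBall.1 hy).lt_of_ne fun h => (hsphere y h).not_gt hlt
  exact ⟨y, hyball, hlt, hmax.isLocalMax (closedBall_mem_nhds_of_mem hyball)⟩

theorem eventually_le_mul_sq_sub_sq_rpow_neg {R A β : ℝ} (hR : 0 < R) (hA : 0 < A) (hβ : 0 < β)
    (M : ℝ) : ∀ᶠ r in 𝓝[<] R, M ≤ A * (R ^ 2 - r ^ 2) ^ (-β) := by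
  have hgap : Tendsto (fun r => R ^ 2 - r ^ 2) (𝓝[<] R) (𝓝[>] 0) := by
    refine tendsto_nhdsWithin_iff.2 ⟨?_, ?_⟩
    · have : Tendsto (fun r => R ^ 2 - r ^ 2) (𝓝 R) (𝓝 (R ^ 2 - R ^ 2)) :=
        (continuous_const.sub (continuous_pow 2)).tendsto R
      simpa using this.mono_left nhdsWithin_le_nhds
    · filter_upwards [Ioo_mem_nhdsLT hR] with r hr
      exact sub_pos.2 (pow_lt_pow_left₀ hr.2 hr.1.le two_ne_zero)
  exact (((tendsto_rpow_neg_nhdsGT_zero (neg_neg_of_pos hβ)).comp hgap).const_mul_atTop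
    hA).eventually_ge_atTop M

section Comparison

variable {m : ℕ} {u : EuclideanSpace ℝ (Fin m) → ℝ} {x₀ : EuclideanSpace ℝ (Fin m)}
  {σ β c R : ℝ}

theorem le_barrier_of_laplacian_ge (hu : ContDiff ℝ 2 u) (hσ : 1 < σ) (hβ : β * (σ - 1) = 2)
    (hc : 0 < c) (hR : 0 < R) (hΔ : ∀ z ∈ ball x₀ R, c * u z ^ σ ≤ euclideanLaplacian u z)
    {A : ℝ} (hA : 0 < A) (hAσ : β * (2 * m + 4 * (β + 1)) * R ^ 2 ≤ c * A ^ (σ - 1)) :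
    u x₀ ≤ barrier x₀ R A β x₀ := by
  have hβ0 : 0 < β := by nlinarith
  by_contra! hlt
  obtain ⟨M, hM⟩ := (isCompact_closedBall x₀ R).bddAbove_image hu.continuous.continuousOn
  obtain ⟨r, hrM, hr0, hrR⟩ :=
    ((eventually_le_mul_sq_sub_sq_rpow_neg hR hA hβ0 M).and (Ioo_mem_nhdsLT hR)).exists
  have hsphere : ∀ z ∈ sphere x₀ r, u z ≤ barrier x₀ R A β z := fun z hz => by
    rw [barrier, ← dist_eq_norm, mem_sphere.1 hz]
    exact (hM ⟨z, closedBall_subset_closedBall hrR.le (sphere_subset_closedBall hz), rfl⟩).trans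
      hrM
  obtain ⟨y, hy, hwy, hmax⟩ := exists_isLocalMax_sub_of_le_on_sphere hr0.le
    hu.continuous.continuousOn (continuousOn_barrier x₀ hrR A β) hsphere hlt
  have hyR : ‖y - x₀‖ < R := (mem_ball_iff_norm.1 hy).trans hrR
  set p := R ^ 2 - ‖y - x₀‖ ^ 2
  have hp : 0 < p := sq_sub_norm_sq_pos hyR
  have hwσ : c * barrier x₀ R A β y ^ σ = c * A ^ (σ - 1) * A * p ^ (-β - 2) := by
    rw [barrier, Real.mul_rpow hA.le (Real.rpow_nonneg hp.le _), ← Real.rpow_mul hp.le,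
      show -β * σ = -β - 2 by linarith, show σ = (σ - 1) + 1 by ring, Real.rpow_add hA,
      Real.rpow_one, show σ - 1 + 1 - 1 = σ - 1 by ring]
    ring
  have hpow : barrier x₀ R A β y ^ σ < u y ^ σ :=
    Real.rpow_lt_rpow (by unfold barrier; positivity) hwy (by linarith)
  have hcontra : c * A ^ (σ - 1) * A * p ^ (-β - 2) < c * A ^ (σ - 1) * A * p ^ (-β - 2) :=
    calc _ = c * barrier x₀ R A β y ^ σ := hwσ.symm
      _ < c * u y ^ σ := mul_lt_mul_of_pos_left hpow hc
      _ ≤ euclideanLaplacian u y := hΔ y (ball_subset_ball hrR.le hy)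
      _ ≤ A * β * (2 * m + 4 * (β + 1)) * R ^ 2 * p ^ (-β - 2) :=
        euclideanLaplacian_le_of_isLocalMax_sub_barrier hu hA.le hβ0.le hyR hmax
      _ = β * (2 * m + 4 * (β + 1)) * R ^ 2 * (A * p ^ (-β - 2)) := by ring
      _ ≤ c * A ^ (σ - 1) * (A * p ^ (-β - 2)) :=
        mul_le_mul_of_nonneg_right hAσ (mul_nonneg hA.le (Real.rpow_pos_of_pos hp _).le)
      _ = c * A ^ (σ - 1) * A * p ^ (-β - 2) := by ring
  exact lt_irrefl _ hcontra

theorem rpow_sub_one_le_of_laplacian_ge (hu : ContDiff ℝ 2 u) (hσ : 1 < σ) (hβ : β * (σ - 1) = 2)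
    (hc : 0 < c) (hR : 0 < R) (hΔ : ∀ z ∈ ball x₀ R, c * u z ^ σ ≤ euclideanLaplacian u z)
    (hux₀ : 0 ≤ u x₀) : u x₀ ^ (σ - 1) ≤ β * (2 * m + 4 * (β + 1)) / (c * R ^ 2) := by
  have hβ0 : 0 < β := by nlinarith
  set K := β * (2 * m + 4 * (β + 1))
  obtain ⟨A, hA, hAσ⟩ : ∃ A : ℝ, 0 < A ∧ A ^ (σ - 1) = K * R ^ 2 / c :=
    ⟨_, by positivity, Real.rpow_inv_rpow (by positivity) (by linarith)⟩
  have hle := le_barrier_of_laplacian_ge hu hσ hβ hc hR hΔ hA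
    (by rw [hAσ, mul_div_cancel₀ _ hc.ne'])
  calc u x₀ ^ (σ - 1) ≤ barrier x₀ R A β x₀ ^ (σ - 1) := Real.rpow_le_rpow hux₀ hle (by linarith)
    _ = A ^ (σ - 1) * (R ^ 2) ^ (-2 : ℝ) := by
      rw [barrier, sub_self, norm_zero, zero_pow two_ne_zero, sub_zero,
        Real.mul_rpow hA.le (by positivity), ← Real.rpow_mul (by positivity),
        show -β * (σ - 1) = -2 by linarith]
    _ = K / (c * R ^ 2) := by
      rw [hAσ, Real.rpow_neg (by positivity), Real.rpow_two]
      field_simp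

end Comparison

theorem one_div_le_of_norm_le {E : Type*} [NormedAddCommGroup E] [NormedSpace ℝ E] [Nontrivial E]
    {Q : ℝ → ℝ} {b : E → ℝ} (hQpos : ∀ t > 0, 0 < Q t)
    (hQmono : ∀ s t : ℝ, 0 < s → s ≤ t → Q s ≤ Q t) (hb : Continuous b)
    (hbQ : ∀ x : E, 0 < ‖x‖ → 1 / Q ‖x‖ ≤ b x) {z : E} {r : ℝ} (hr : 0 < r) (hz : ‖z‖ ≤ r) :
    1 / Q r ≤ b z := by
  have hoff : ∀ x : E, 0 < ‖x‖ → ‖x‖ ≤ r → 1 / Q r ≤ b x := fun x hx hxr =>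
    (one_div_le_one_div_of_le (hQpos _ hx) (hQmono _ _ hx hxr)).trans (hbQ x hx)
  rcases (norm_nonneg z).lt_or_eq with hz0 | hz0
  · exact hoff z hz0 hz
  -- At the origin, `b 0` is a limit of values `b x` with `0 < ‖x‖ < r`.
  obtain rfl : z = 0 := norm_eq_zero.1 hz0.symm
  refine ge_of_tendsto ((hb.tendsto 0).mono_left (nhdsWithin_le_nhds (s := {0}ᶜ))) ?_
  filter_upwards [nhdsWithin_le_nhds (ball_mem_nhds (0 : E) hr), self_mem_nhdsWithin]
    with x hxr hx0
  exact hoff x (norm_pos_iff.2 hx0) (mem_ball_zero_iff.1 hxr).le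

theorem tendsto_comp_const_add_div_sq {Q : ℝ → ℝ} (hQ : Q =o[atTop] fun t => t ^ 2) (a : ℝ) :
    Tendsto (fun R => Q (a + R) / R ^ 2) atTop (𝓝 0) := by
  have hshift : (fun R => Q (a + R)) =o[atTop] fun R => (a + R) ^ 2 :=
    hQ.comp_tendsto (tendsto_atTop_add_const_left _ a tendsto_id)
  have hlin : (fun R : ℝ => a + R) =O[atTop] fun R => R :=
    (isLittleO_const_id_atTop a).isBigO.add (isBigO_refl _ _)
  exact (hshift.trans_isBigO (hlin.pow 2)).tendsto_div_nhds_zero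

theorem stmt7_general {m : ℕ} (hm : 2 ≤ m) (σ : ℝ) (hσ : 1 < σ)
    (Q : ℝ → ℝ)
    (hQpos : ∀ t > (0:ℝ), 0 < Q t)
    (hQmono : ∀ s t : ℝ, 0 < s → s ≤ t → Q s ≤ Q t)
    (hQo : Q =o[atTop] fun t => t ^ 2)
    (a b : EuclideanSpace ℝ (Fin m) → ℝ) (hb : Continuous b)
    (hbQ : ∀ x : EuclideanSpace ℝ (Fin m), 0 < ‖x‖ → 1 / Q ‖x‖ ≤ b x)
    (hapos : ∀ x, 0 ≤ a x)
    (u : EuclideanSpace ℝ (Fin m) → ℝ) (hu : ContDiff ℝ 2 u)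
    (hupos : ∀ x, 0 ≤ u x)
    (hineq : ∀ x, b x * u x ^ σ + a x * u x ≤ euclideanLaplacian u x) :
    ∀ x, u x = 0 := by
  have : Nontrivial (EuclideanSpace ℝ (Fin m)) :=
    Module.nontrivial_of_finrank_pos (R := ℝ) (by simp; omega)
  intro x₀
  set β := 2 / (σ - 1)
  have hβ : β * (σ - 1) = 2 := div_mul_cancel₀ _ (by linarith)
  have hest : ∀ R > 0, u x₀ ^ (σ - 1) ≤ β * (2 * m + 4 * (β + 1)) * (Q (‖x₀‖ + R) / R ^ 2) := by
    intro R hR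
    have hΔ : ∀ z ∈ ball x₀ R, 1 / Q (‖x₀‖ + R) * u z ^ σ ≤ euclideanLaplacian u z := by
      intro z hz
      have hz' : ‖z‖ ≤ ‖x₀‖ + R :=
        (norm_le_norm_add_norm_sub' z x₀).trans (by linarith [mem_ball_iff_norm.1 hz])
      have hbz := one_div_le_of_norm_le hQpos hQmono hb hbQ (by positivity) hz'
      calc 1 / Q (‖x₀‖ + R) * u z ^ σ ≤ b z * u z ^ σ :=
            mul_le_mul_of_nonneg_right hbz (Real.rpow_nonneg (hupos z) σ)
        _ ≤ b z * u z ^ σ + a z * u z := le_add_of_nonneg_right (mul_nonneg (hapos z) (hupos z))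
        _ ≤ euclideanLaplacian u z := hineq z
    have hQR : 0 < Q (‖x₀‖ + R) := hQpos _ (by positivity)
    calc _ ≤ _ := rpow_sub_one_le_of_laplacian_ge hu hσ hβ (by positivity) hR hΔ (hupos x₀)
      _ = _ := by field_simp
  have hlim := (tendsto_comp_const_add_div_sq hQo ‖x₀‖).const_mul (β * (2 * m + 4 * (β + 1)))
  rw [mul_zero] at hlim
  have hle : u x₀ ^ (σ - 1) ≤ 0 := ge_of_tendsto hlim ((eventually_gt_atTop 0).mono hest)
  by_contra hne
  exact hle.not_gt (Real.rpow_pos_of_pos ((hupos x₀).lt_of_ne' hne) _)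

theorem stmt7 {m : ℕ} (hm : 2 ≤ m) (σ : ℝ) (hσ : 1 < σ)
    (Q : ℝ → ℝ)
    (hQpos : ∀ t > (0:ℝ), 0 < Q t)
    (hQmono : ∀ s t : ℝ, 0 < s → s ≤ t → Q s ≤ Q t)
    (hQo : Q =o[atTop] fun t => t ^ 2)
    (hliminf : ∃ C : ℝ, ∃ᶠ r in atTop, Q r * Real.log r / r ^ 2 ≤ C)
    (a b : EuclideanSpace ℝ (Fin m) → ℝ) (ha : Continuous a) (hb : Continuous b)
    (hbQ : ∀ x : EuclideanSpace ℝ (Fin m), 0 < ‖x‖ → 1 / Q ‖x‖ ≤ b x)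
    (hapos : ∀ x, 0 ≤ a x)
    (u : EuclideanSpace ℝ (Fin m) → ℝ) (hu : ContDiff ℝ 2 u)
    (hupos : ∀ x, 0 ≤ u x)
    (hineq : ∀ x, b x * u x ^ σ + a x * u x ≤ euclideanLaplacian u x) :
    ∀ x, u x = 0 :=
  stmt7_general hm σ hσ Q hQpos hQmono hQo a b hb hbQ hapos u hu hupos hineq
end
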